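/- arXiv:1807.07067 — 3 statements merged into one kernel-verified Lean document; each statement's English description precedes it below -/
import Mathlib

section
/- Let N = (G, c) be a flow network. For all A1, A2 ⊆ Ein with A1 ∩ A2 = ∅ and all B ⊆ Eout: maxFromToAft_N(A1, B | A2, B) = maxFromTo_N(A1 ∪ A2, B) − maxFromTo_N(A2, B). -/
/-!
The inequality `≤` is immediate: `f + f'` is a flow from `A1 ∪ A2` to `B`, and `f'` alone already
carries `maxFromTo A2 B` through `A2`. For `≥` one needs a maximum flow `F` from `A1 ∪ A2` that
also carries the maximum `maxFromTo A2 B` through `A2`; then `f'` equal to `F` on `A2` and to a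
proportional share of `F` on `B`, and `f = F - f'`, attain the bound. Such an `F` is obtained by
starting from a maximum flow from `A2` and maximizing the value among flows that do not lower the
flow through `A2`. Augmenting paths never decrease the flow on input edges, so the maximizer has a
tight cut (the max-flow min-cut argument) and is a maximum flow from `A1 ∪ A2`; that it carries no
more than `maxFromTo A2 B` through `A2` is a second cut argument, with the tight cut of a maximum
flow from `A2`.
-/

open Finset

/-- A flow network: a finite vertex set `V`, a finite edge set `E` partitioned into
input edges `Ein`, output edges `Eout` and internal edges `Eint`; each internal edge
has two distinct endpoints `tail e` and `head e` (with at most one internal edge per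
`(tail, head)` pair), each input edge has a head only, each output edge a tail only
(values of `tail`/`head` outside their intended domains are irrelevant junk); and a
nonnegative upper-bound capacity `cap`. -/
structure FlowNetwork (V E : Type) [Fintype V] [Fintype E]
    [DecidableEq V] [DecidableEq E] where
  Ein : Finset E
  Eout : Finset E
  Eint : Finset E
  cover : Ein ∪ Eout ∪ Eint = Finset.univ
  disj_in_out : Disjoint Ein Eout
  disj_in_int : Disjoint Ein Eint
  disj_out_int : Disjoint Eout Eint
  tail : E → V
  head : E → V
  no_self_loop : ∀ e ∈ Eint, tail e ≠ head e
  no_multi : ∀ e ∈ Eint, ∀ e' ∈ Eint, tail e = tail e' → head e = head e' → e = e'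
  cap : E → ℝ
  cap_nonneg : ∀ e, 0 ≤ cap e

namespace FlowNetwork

variable {V E : Type} [Fintype V] [Fintype E] [DecidableEq V] [DecidableEq E]

/-- A flow `f : E → ℝ≥0` is feasible if it conserves flow at every vertex and
respects the capacity of every edge. -/
def Feasible (N : FlowNetwork V E) (f : E → ℝ) : Prop :=
  (∀ e, 0 ≤ f e) ∧ (∀ e, f e ≤ N.cap e) ∧
  ∀ v : V,
    ∑ e ∈ (N.Ein ∪ N.Eint).filter (fun e => N.head e = v), f e =
    ∑ e ∈ (N.Eout ∪ N.Eint).filter (fun e => N.tail e = v), f e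

/-- `maxFromTo N A B`: the supremum of `f(A)` over all feasible flows `f` that
vanish on `(Ein \ A) ∪ (Eout \ B)`. -/
noncomputable def maxFromTo (N : FlowNetwork V E) (A B : Finset E) : ℝ :=
  sSup {x : ℝ | ∃ f : E → ℝ, N.Feasible f ∧
    (∀ e ∈ (N.Ein \ A) ∪ (N.Eout \ B), f e = 0) ∧ x = ∑ e ∈ A, f e}


/-- `maxFromToAftIn N A1 B A2` = `maxFromToAft N (A1, B | A2, B)`: the supremum of
`f(A1)` over all pairs `(f, f')` of nonnegative functions with `f + f'` feasible,
`f'(A2) = f'(B) = maxFromTo N A2 B`, and `f + f'` vanishing on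
`(Ein \ (A1 ∪ A2)) ∪ (Eout \ B)`. -/
noncomputable def maxFromToAftIn (N : FlowNetwork V E) (A1 B A2 : Finset E) : ℝ :=
  sSup {x : ℝ | ∃ f f' : E → ℝ, (∀ e, 0 ≤ f e) ∧ (∀ e, 0 ≤ f' e) ∧
    N.Feasible (f + f') ∧
    ∑ e ∈ A2, f' e = N.maxFromTo A2 B ∧ ∑ e ∈ B, f' e = N.maxFromTo A2 B ∧
    (∀ e ∈ (N.Ein \ (A1 ∪ A2)) ∪ (N.Eout \ B), f e + f' e = 0) ∧
    x = ∑ e ∈ A1, f e}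

end FlowNetwork

lemma add_single_mem_pi_Icc {ι : Type*} [DecidableEq ι] {c f : ι → ℝ}
    (hf : f ∈ Set.univ.pi fun i => Set.Icc 0 (c i)) {i : ι} {t : ℝ}
    (ht : f i + t ∈ Set.Icc 0 (c i)) :
    f + Pi.single i t ∈ Set.univ.pi fun i => Set.Icc 0 (c i) := by
  intro x _
  by_cases hx : x = i
  · subst hx; simpa using ht
  · simpa [hx] using hf x (Set.mem_univ x)

/-- The weights `a : b = ε : δ` make the amounts `δ` and `ε` moved by `d` and `p` match; the
combination stays in the box by convexity. -/
lemma exists_combo_mem_pi_Icc {ι : Type*} {c f d p : ι → ℝ}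
    (hd : f + d ∈ Set.univ.pi fun i => Set.Icc 0 (c i))
    (hp : f + p ∈ Set.univ.pi fun i => Set.Icc 0 (c i)) {δ ε : ℝ} (hδ : 0 < δ) (hε : 0 < ε) :
    ∃ a b : ℝ, 0 < a ∧ a * δ = b * ε ∧
      f + (a • d + b • p) ∈ Set.univ.pi fun i => Set.Icc 0 (c i) := by
  have hconv : Convex ℝ (Set.univ.pi fun i => Set.Icc 0 (c i)) :=
    convex_pi fun i _ => convex_Icc 0 (c i)
  refine ⟨ε / (ε + δ), δ / (ε + δ), by positivity, by ring, ?_⟩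
  have hsum : ε / (ε + δ) + δ / (ε + δ) = 1 := by field_simp
  convert hconv hd hp (by positivity) (by positivity) hsum using 1
  rw [smul_add, smul_add, add_add_add_comm, ← add_smul, hsum, one_smul]

lemma exists_mem_Icc_mul_eq {m M : ℝ} (hm : 0 ≤ m) (hmM : m ≤ M) :
    ∃ t ∈ Set.Icc (0 : ℝ) 1, t * M = m := by
  rcases hm.eq_or_lt with rfl | hm
  · exact ⟨0, ⟨le_rfl, zero_le_one⟩, zero_mul M⟩
  · exact ⟨m / M, ⟨div_nonneg hm.le (hm.le.trans hmM), div_le_one_of_le₀ hmM (hm.le.trans hmM)⟩,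
      div_mul_cancel₀ m (hm.trans_le hmM).ne'⟩

namespace FlowNetwork

variable {V E : Type} [Fintype V] [Fintype E] [DecidableEq V] [DecidableEq E]

section

open Matrix

variable (N : FlowNetwork V E)

/-- `N.incidence *ᵥ f` is the net inflow of `f` at each vertex. -/
def incidence : Matrix V E ℝ := Matrix.of fun v e =>
  (if e ∈ N.Ein ∪ N.Eint ∧ N.head e = v then 1 else 0) -
    (if e ∈ N.Eout ∪ N.Eint ∧ N.tail e = v then 1 else 0)

def IsFlow (c f : E → ℝ) : Prop :=
  f ∈ Set.univ.pi (fun e => Set.Icc 0 (c e)) ∧ N.incidence *ᵥ f = 0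

def value (f : E → ℝ) : ℝ := ∑ e ∈ N.Ein, f e

lemma notMem_Eout_of_mem_Ein {e : E} (he : e ∈ N.Ein) : e ∉ N.Eout :=
  Finset.disjoint_left.mp N.disj_in_out he

lemma notMem_Eint_of_mem_Ein {e : E} (he : e ∈ N.Ein) : e ∉ N.Eint :=
  Finset.disjoint_left.mp N.disj_in_int he

lemma notMem_Eint_of_mem_Eout {e : E} (he : e ∈ N.Eout) : e ∉ N.Eint :=
  Finset.disjoint_left.mp N.disj_out_int he

lemma mem_Ein_or_mem_Eout_or_mem_Eint (e : E) : e ∈ N.Ein ∨ e ∈ N.Eout ∨ e ∈ N.Eint := by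
  have := N.cover ▸ Finset.mem_univ e
  simp only [Finset.mem_union] at this
  tauto

lemma incidence_mulVec_apply (f : E → ℝ) (v : V) :
    (N.incidence *ᵥ f) v =
      ∑ e ∈ (N.Ein ∪ N.Eint).filter (fun e => N.head e = v), f e -
        ∑ e ∈ (N.Eout ∪ N.Eint).filter (fun e => N.tail e = v), f e := by
  simp only [Matrix.mulVec, dotProduct, incidence, Matrix.of_apply, sub_mul, ite_mul, one_mul,
    zero_mul, Finset.sum_sub_distrib, Finset.sum_filter]
  simp only [ite_and, Finset.sum_ite_mem, Finset.univ_inter]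

lemma incidence_mulVec_single_of_mem_Ein {e : E} (he : e ∈ N.Ein) (t : ℝ) :
    N.incidence *ᵥ Pi.single e t = Pi.single (N.head e) t := by
  ext v
  simp [Matrix.mulVec_single, incidence, Pi.single_apply, he, N.notMem_Eout_of_mem_Ein he,
    N.notMem_Eint_of_mem_Ein he, eq_comm]

lemma incidence_mulVec_single_of_mem_Eout {e : E} (he : e ∈ N.Eout) (t : ℝ) :
    N.incidence *ᵥ Pi.single e t = -Pi.single (N.tail e) t := by
  ext v
  have := N.notMem_Eint_of_mem_Eout he
  have : e ∉ N.Ein := fun h => N.notMem_Eout_of_mem_Ein h he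
  simp [Matrix.mulVec_single, incidence, Pi.single_apply, *, eq_comm]

lemma incidence_mulVec_single_of_mem_Eint {e : E} (he : e ∈ N.Eint) (t : ℝ) :
    N.incidence *ᵥ Pi.single e t = Pi.single (N.head e) t - Pi.single (N.tail e) t := by
  ext v
  simp [Matrix.mulVec_single, incidence, Pi.single_apply, he, eq_comm, sub_mul]

lemma feasible_iff_isFlow (f : E → ℝ) : N.Feasible f ↔ N.IsFlow N.cap f := by
  simp only [Feasible, IsFlow, Set.mem_univ_pi, Set.mem_Icc, forall_and, funext_iff,
    incidence_mulVec_apply, Pi.zero_apply, sub_eq_zero]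
  exact and_assoc.symm

variable {N} in
lemma IsFlow.mem_Icc {c f : E → ℝ} (hf : N.IsFlow c f) (e : E) : f e ∈ Set.Icc 0 (c e) :=
  hf.1 e (Set.mem_univ e)

lemma sum_Ein_eq_sum_Eout {g : E → ℝ} (hg : N.incidence *ᵥ g = 0) :
    ∑ e ∈ N.Ein, g e = ∑ e ∈ N.Eout, g e := by
  have h : ∑ v, (N.incidence *ᵥ g) v = 0 := by simp [hg]
  simp only [incidence_mulVec_apply, Finset.sum_sub_distrib, Finset.sum_fiberwise,
    Finset.sum_union N.disj_in_int, Finset.sum_union N.disj_out_int] at h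
  linarith

def crossingSign (R : Finset V) (e : E) : ℝ :=
  (if e ∈ N.Ein ∪ N.Eint ∧ N.head e ∈ R then 1 else 0) -
    (if e ∈ N.Eout ∪ N.Eint ∧ N.tail e ∈ R then 1 else 0)

lemma sum_incidence_mulVec (R : Finset V) (g : E → ℝ) :
    ∑ v ∈ R, (N.incidence *ᵥ g) v = ∑ e, N.crossingSign R e * g e := by
  simp only [mulVec, dotProduct]
  rw [Finset.sum_comm]
  refine Finset.sum_congr rfl fun e _ => ?_
  rw [← Finset.sum_mul]
  simp [incidence, crossingSign, Finset.sum_sub_distrib, ite_and, Finset.sum_ite_eq]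

/-- `R` is a cut certifying maximality of `f`: every edge crossing the boundary of `R` is used
to capacity in the forward direction and not at all in the backward direction. -/
def IsTightCut (c f : E → ℝ) (R : Finset V) : Prop :=
  (∀ e ∈ N.Ein, N.head e ∉ R → f e = c e) ∧
  (∀ e ∈ N.Eout, N.tail e ∈ R → f e = c e) ∧
  (∀ e ∈ N.Eint, N.tail e ∈ R → N.head e ∉ R → f e = c e) ∧
  (∀ e ∈ N.Eint, N.head e ∈ R → N.tail e ∉ R → f e = 0)

variable {N} in
lemma IsTightCut.sum_min_le {c f g : E → ℝ} {R : Finset V} (hf : N.IsFlow c f)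
    (hR : N.IsTightCut c f R) (hg₀ : 0 ≤ g) (hg : N.incidence *ᵥ g = 0)
    (hgc : ∀ e ∉ N.Ein, g e ≤ c e) :
    ∑ e ∈ N.Ein, min (g e) (c e) ≤ N.value f := by
  obtain ⟨hin, hout, hfwd, hbwd⟩ := hR
  have hcross : ∑ e, N.crossingSign R e * (g e - f e) = 0 := by
    simpa [mulVec_sub, hg, hf.2] using (N.sum_incidence_mulVec R (g - f)).symm
  have hterm : ∀ e, (if e ∈ N.Ein then min (g e) (c e) - f e else 0) ≤
      N.crossingSign R e * (g e - f e) := by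
    intro e
    have hfe := hf.mem_Icc e
    have hge : 0 ≤ g e := hg₀ e
    rcases N.mem_Ein_or_mem_Eout_or_mem_Eint e with he | he | he
    · have := N.notMem_Eout_of_mem_Ein he
      have := N.notMem_Eint_of_mem_Ein he
      by_cases hR : N.head e ∈ R
      · simp [crossingSign, *]
      · simp [crossingSign, *, hin e he hR]
    · have := N.notMem_Eint_of_mem_Eout he
      have : e ∉ N.Ein := fun h => N.notMem_Eout_of_mem_Ein h he
      have := hgc e this
      by_cases hR : N.tail e ∈ R
      · simp [crossingSign, *, hout e he hR]
      · simp [crossingSign, *]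
    · have : e ∉ N.Ein := fun h => N.notMem_Eint_of_mem_Ein h he
      have := hgc e this
      by_cases hh : N.head e ∈ R <;> by_cases ht : N.tail e ∈ R
      · simp [crossingSign, *]
      · simp [crossingSign, *, hbwd e he hh ht]
      · simp [crossingSign, *, hfwd e he ht hh]
      · simp [crossingSign, *]
  have hsum : ∑ e ∈ N.Ein, min (g e) (c e) - N.value f =
      ∑ e, if e ∈ N.Ein then min (g e) (c e) - f e else 0 := by
    rw [value, ← Finset.sum_sub_distrib, Finset.sum_ite_mem, Finset.univ_inter]
  linarith [Finset.sum_le_sum fun e (_ : e ∈ Finset.univ) => hterm e]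

variable {N} in
lemma IsTightCut.isGreatest {c f : E → ℝ} {R : Finset V} (hf : N.IsFlow c f)
    (hR : N.IsTightCut c f R) : IsGreatest (N.value '' {g | N.IsFlow c g}) (N.value f) := by
  refine ⟨⟨f, hf, rfl⟩, ?_⟩
  rintro _ ⟨g, hg, rfl⟩
  calc N.value g = ∑ e ∈ N.Ein, min (g e) (c e) :=
        Finset.sum_congr rfl fun e _ => (min_eq_left (hg.mem_Icc e).2).symm
    _ ≤ N.value f := hR.sum_min_le hf (fun e => (hg.mem_Icc e).1) hg.2 fun e _ => (hg.mem_Icc e).2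

lemma ne_of_mem_Ein_union_Eout_of_mem_Eint {x e : E} (hx : x ∈ N.Ein ∪ N.Eout)
    (he : e ∈ N.Eint) : x ≠ e := by
  rintro rfl
  rcases Finset.mem_union.mp hx with hx | hx
  exacts [N.notMem_Eint_of_mem_Ein hx he, N.notMem_Eint_of_mem_Eout hx he]

def Residual (c f : E → ℝ) (u w : V) : Prop :=
  ∃ e ∈ N.Eint, (N.tail e = u ∧ N.head e = w ∧ f e < c e) ∨
    (N.tail e = w ∧ N.head e = u ∧ 0 < f e)

variable {N} in
lemma Residual.exists_perturbation {c f : E → ℝ} {u w : V} (hf : N.IsFlow c f)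
    (huw : N.Residual c f u w) :
    ∃ p : E → ℝ, ∃ ε > 0, f + p ∈ (Set.univ.pi fun e => Set.Icc 0 (c e)) ∧
      (∀ e ∈ N.Ein ∪ N.Eout, p e = 0) ∧
      N.incidence *ᵥ p = Pi.single w ε - Pi.single u ε := by
  obtain ⟨e, he, ⟨rfl, rfl, hlt⟩ | ⟨rfl, rfl, hpos⟩⟩ := huw
  · refine ⟨Pi.single e (c e - f e), c e - f e, sub_pos.mpr hlt,
      add_single_mem_pi_Icc hf.1 ?_, ?_, N.incidence_mulVec_single_of_mem_Eint he _⟩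
    · have := hf.mem_Icc e
      constructor <;> simp only [add_sub_cancel] <;> linarith [this.1]
    · rintro x hx
      simp [N.ne_of_mem_Ein_union_Eout_of_mem_Eint hx he]
  · refine ⟨Pi.single e (-f e), f e, hpos, add_single_mem_pi_Icc hf.1 ?_, ?_, ?_⟩
    · simpa using (hf.mem_Icc e).1.trans (hf.mem_Icc e).2
    · rintro x hx
      simp [N.ne_of_mem_Ein_union_Eout_of_mem_Eint hx he]
    · rw [N.incidence_mulVec_single_of_mem_Eint he, Pi.single_neg, Pi.single_neg]
      abel

/-- `d` is a perturbation of the flow `f` that feeds the amount `d e₀ > 0` into the input edge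
`e₀` and carries it, within capacity, to the vertex `v`, where it is not yet passed on. -/
structure PushesTo (c f d : E → ℝ) (e₀ : E) (v : V) : Prop where
  mem_pi_Icc : f + d ∈ Set.univ.pi fun e => Set.Icc 0 (c e)
  eq_zero : ∀ e ∈ N.Ein ∪ N.Eout, e ≠ e₀ → d e = 0
  pos : 0 < d e₀
  incidence_mulVec : N.incidence *ᵥ d = Pi.single v (d e₀)

lemma pushesTo_head {c f : E → ℝ} (hf : N.IsFlow c f) {e₀ : E} (he₀ : e₀ ∈ N.Ein)
    (hlt : f e₀ < c e₀) : N.PushesTo c f (Pi.single e₀ (c e₀ - f e₀)) e₀ (N.head e₀) where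
  mem_pi_Icc := add_single_mem_pi_Icc hf.1 (by simpa using (hf.mem_Icc e₀).1.trans hlt.le)
  eq_zero e _ he := by simp [he]
  pos := by simpa using hlt
  incidence_mulVec := by simp [N.incidence_mulVec_single_of_mem_Ein he₀]

variable {N} in
lemma PushesTo.step {c f d : E → ℝ} {e₀ : E} {u w : V} (hd : N.PushesTo c f d e₀ u)
    (he₀ : e₀ ∈ N.Ein) (hf : N.IsFlow c f) (huw : N.Residual c f u w) :
    ∃ d', N.PushesTo c f d' e₀ w := by
  obtain ⟨p, ε, hε, hp, hp0, hpinc⟩ := huw.exists_perturbation hf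
  obtain ⟨a, b, ha, hab, hmem⟩ := exists_combo_mem_pi_Icc hd.mem_pi_Icc hp hd.pos hε
  have hpe₀ : p e₀ = 0 := hp0 e₀ (Finset.mem_union_left _ he₀)
  refine ⟨a • d + b • p, hmem, fun e he hne => ?_, ?_, ?_⟩
  · simp [hd.eq_zero e he hne, hp0 e he]
  · simpa [hpe₀] using mul_pos ha hd.pos
  · ext x
    simp only [mulVec_add, mulVec_smul, hd.incidence_mulVec, hpinc, Pi.add_apply, Pi.smul_apply,
      Pi.sub_apply, smul_eq_mul, Pi.single_apply, hpe₀, mul_zero, add_zero]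
    split_ifs <;> linarith

lemma exists_pushesTo_of_reflTransGen {c f : E → ℝ} (hf : N.IsFlow c f) {e₀ : E}
    (he₀ : e₀ ∈ N.Ein) (hlt : f e₀ < c e₀) {v : V}
    (hv : Relation.ReflTransGen (N.Residual c f) (N.head e₀) v) :
    ∃ d, N.PushesTo c f d e₀ v := by
  induction hv with
  | refl => exact ⟨_, N.pushesTo_head hf he₀ hlt⟩
  | tail _ huw ih =>
    obtain ⟨d, hd⟩ := ih
    exact hd.step he₀ hf huw

variable {N} in
lemma PushesTo.augment {c f d : E → ℝ} {e₀ e : E} (hd : N.PushesTo c f d e₀ (N.tail e))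
    (he₀ : e₀ ∈ N.Ein) (hf : N.IsFlow c f) (he : e ∈ N.Eout) (hlt : f e < c e) :
    ∃ g, N.IsFlow c g ∧ (∀ x ∈ N.Ein, f x ≤ g x) ∧ N.value f < N.value g := by
  have hp : f + Pi.single e (c e - f e) ∈ Set.univ.pi fun e => Set.Icc 0 (c e) :=
    add_single_mem_pi_Icc hf.1 (by simpa using (hf.mem_Icc e).1.trans hlt.le)
  obtain ⟨a, b, ha, hab, hmem⟩ :=
    exists_combo_mem_pi_Icc hd.mem_pi_Icc hp hd.pos (sub_pos.mpr hlt)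
  have hsingle : ∀ x ∈ N.Ein, (Pi.single e (c e - f e) : E → ℝ) x = 0 := by
    rintro x hx
    have : x ≠ e := by rintro rfl; exact N.notMem_Eout_of_mem_Ein hx he
    simp [this]
  have hd₀ : ∀ x ∈ N.Ein, x ≠ e₀ → d x = 0 := fun x hx => hd.eq_zero x (Finset.mem_union_left _ hx)
  refine ⟨_, ⟨hmem, ?_⟩, fun x hx => ?_, ?_⟩
  · ext v
    simp only [mulVec_add, mulVec_smul, hd.incidence_mulVec, hf.2,
      N.incidence_mulVec_single_of_mem_Eout he, Pi.add_apply, Pi.smul_apply, Pi.neg_apply,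
      smul_eq_mul, Pi.single_apply, Pi.zero_apply]
    split_ifs <;> linarith
  · rcases eq_or_ne x e₀ with rfl | hne
    · simp [hsingle x hx, (mul_pos ha hd.pos).le]
    · simp [hsingle x hx, hd₀ x hx hne]
  · have : N.value (a • d + b • Pi.single e (c e - f e)) = a * d e₀ := by
      rw [value, Finset.sum_eq_single_of_mem e₀ he₀ fun x hx hne => by
        simp [hsingle x hx, hd₀ x hx hne]]
      simp [hsingle e₀ he₀]
    simp only [value, Pi.add_apply, Finset.sum_add_distrib] at this ⊢
    linarith [mul_pos ha hd.pos]

variable {N} in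
lemma IsFlow.exists_augment_or_isTightCut {c f : E → ℝ} (hf : N.IsFlow c f) :
    (∃ g, N.IsFlow c g ∧ (∀ x ∈ N.Ein, f x ≤ g x) ∧ N.value f < N.value g) ∨
      ∃ R, N.IsTightCut c f R := by
  classical
  set R := Finset.univ.filter fun v => ∃ e₀ ∈ N.Ein, f e₀ < c e₀ ∧
    Relation.ReflTransGen (N.Residual c f) (N.head e₀) v
  by_cases hex : ∃ e ∈ N.Eout, N.tail e ∈ R ∧ f e < c e
  · obtain ⟨e, he, hR, hlt⟩ := hex
    obtain ⟨e₀, he₀, hlt₀, hreach⟩ := (Finset.mem_filter.mp hR).2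
    obtain ⟨d, hd⟩ := N.exists_pushesTo_of_reflTransGen hf he₀ hlt₀ hreach
    exact Or.inl (hd.augment he₀ hf he hlt)
  push Not at hex
  have hclosed : ∀ {u w}, u ∈ R → N.Residual c f u w → w ∈ R := by
    intro u w hu huw
    obtain ⟨e₀, he₀, hlt₀, hreach⟩ := (Finset.mem_filter.mp hu).2
    exact Finset.mem_filter.mpr ⟨Finset.mem_univ _, e₀, he₀, hlt₀, hreach.tail huw⟩
  refine Or.inr ⟨R, fun e he hR => ?_, fun e he hR => ?_, fun e he ht hh => ?_,
    fun e he hh ht => ?_⟩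
  · by_contra hne
    exact hR (Finset.mem_filter.mpr ⟨Finset.mem_univ _, e, he,
      lt_of_le_of_ne (hf.mem_Icc e).2 hne, .refl⟩)
  · exact le_antisymm (hf.mem_Icc e).2 (hex e he hR)
  · by_contra hne
    exact hh (hclosed ht ⟨e, he, Or.inl ⟨rfl, rfl, lt_of_le_of_ne (hf.mem_Icc e).2 hne⟩⟩)
  · by_contra hne
    exact ht (hclosed hh ⟨e, he, Or.inr ⟨rfl, rfl, lt_of_le_of_ne (hf.mem_Icc e).1 (Ne.symm hne)⟩⟩)

lemma isCompact_setOf_isFlow (c : E → ℝ) : IsCompact {f | N.IsFlow c f} :=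
  (isCompact_univ_pi fun _ => isCompact_Icc).of_isClosed_subset
    ((isClosed_set_pi fun _ _ => isClosed_Icc).inter
      (isClosed_eq (continuous_const.matrix_mulVec continuous_id) continuous_const))
    fun _ hf => hf.1

/-- Augmenting paths never decrease the flow on input edges, so a flow of maximum value within a
closed set `T` that is upward closed on the input edges admits a tight cut. -/
lemma exists_isTightCut {c f₀ : E → ℝ} {T : Set (E → ℝ)} (hT : IsClosed T)
    (hmono : ∀ f g, f ∈ T → (∀ x ∈ N.Ein, f x ≤ g x) → g ∈ T) (hf₀ : N.IsFlow c f₀)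
    (hf₀T : f₀ ∈ T) : ∃ f ∈ T, N.IsFlow c f ∧ ∃ R, N.IsTightCut c f R := by
  obtain ⟨f, ⟨hf, hfT⟩, hmax⟩ := ((N.isCompact_setOf_isFlow c).inter_right hT).exists_isMaxOn
    ⟨f₀, hf₀, hf₀T⟩ (continuous_finsetSum _ fun e _ => continuous_apply e).continuousOn
  refine ⟨f, hfT, hf, hf.exists_augment_or_isTightCut.resolve_left ?_⟩
  rintro ⟨g, hg, hfg, hlt⟩
  exact (hmax ⟨hg, hmono f g hfT hfg⟩ : N.value g ≤ N.value f).not_gt hlt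

def capFromTo (S B : Finset E) (e : E) : ℝ :=
  if e ∈ (N.Ein \ S) ∪ (N.Eout \ B) then 0 else N.cap e

lemma isFlow_capFromTo_iff {S B : Finset E} {f : E → ℝ} :
    N.IsFlow (N.capFromTo S B) f ↔
      N.Feasible f ∧ ∀ e ∈ (N.Ein \ S) ∪ (N.Eout \ B), f e = 0 := by
  simp only [feasible_iff_isFlow, IsFlow, Set.mem_univ_pi, Set.mem_Icc, capFromTo]
  constructor
  · rintro ⟨hbox, hcons⟩
    refine ⟨⟨fun e => ⟨(hbox e).1, ?_⟩, hcons⟩, fun e he => ?_⟩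
    · have := (hbox e).2
      split_ifs at this
      exacts [this.trans (N.cap_nonneg e), this]
    · simpa [he, (hbox e).1.ge_iff_eq'] using (hbox e).2
  · rintro ⟨⟨hbox, hcons⟩, hzero⟩
    refine ⟨fun e => ⟨(hbox e).1, ?_⟩, hcons⟩
    split_ifs with he
    exacts [(hzero e he).le, (hbox e).2]

lemma capFromTo_mono {S S' : Finset E} (hS : S ⊆ S') (B : Finset E) (e : E) :
    N.capFromTo S B e ≤ N.capFromTo S' B e := by
  unfold capFromTo
  split_ifs with h h' h'
  · exact le_rfl
  · exact N.cap_nonneg e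
  · exfalso
    simp only [Finset.mem_union, Finset.mem_sdiff] at h h'
    tauto
  · exact le_rfl

lemma capFromTo_of_notMem_Ein {e : E} (he : e ∉ N.Ein) (S S' B : Finset E) :
    N.capFromTo S B e = N.capFromTo S' B e := by
  simp [capFromTo, he]

variable {N} in
lemma IsFlow.mono {c c' f : E → ℝ} (hf : N.IsFlow c f) (hc : ∀ e, c e ≤ c' e) :
    N.IsFlow c' f :=
  ⟨fun e _ => ⟨(hf.mem_Icc e).1, (hf.mem_Icc e).2.trans (hc e)⟩, hf.2⟩

lemma value_eq_sum_of_isFlow_capFromTo {S B : Finset E} (hS : S ⊆ N.Ein) {f : E → ℝ}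
    (hf : N.IsFlow (N.capFromTo S B) f) : N.value f = ∑ e ∈ S, f e := by
  rw [value, ← Finset.sum_sdiff hS, Finset.sum_eq_zero fun e he =>
    (N.isFlow_capFromTo_iff.mp hf).2 e (Finset.mem_union_left _ he), zero_add]

lemma maxFromTo_eq_sSup {S : Finset E} (hS : S ⊆ N.Ein) (B : Finset E) :
    N.maxFromTo S B = sSup (N.value '' {f | N.IsFlow (N.capFromTo S B) f}) := by
  rw [maxFromTo]
  congr 1
  ext x
  constructor
  · rintro ⟨f, hfeas, hzero, rfl⟩
    have hf := N.isFlow_capFromTo_iff.mpr ⟨hfeas, hzero⟩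
    exact ⟨f, hf, N.value_eq_sum_of_isFlow_capFromTo hS hf⟩
  · rintro ⟨f, hf, rfl⟩
    obtain ⟨hfeas, hzero⟩ := N.isFlow_capFromTo_iff.mp hf
    exact ⟨f, hfeas, hzero, N.value_eq_sum_of_isFlow_capFromTo hS hf⟩

variable {N} in
lemma IsTightCut.maxFromTo_eq {S B : Finset E} (hS : S ⊆ N.Ein) {f : E → ℝ} {R : Finset V}
    (hf : N.IsFlow (N.capFromTo S B) f) (hR : N.IsTightCut (N.capFromTo S B) f R) :
    N.maxFromTo S B = N.value f := by
  rw [N.maxFromTo_eq_sSup hS, (hR.isGreatest hf).csSup_eq]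

lemma exists_isTightCut_capFromTo (S B : Finset E) :
    ∃ f, N.IsFlow (N.capFromTo S B) f ∧ ∃ R, N.IsTightCut (N.capFromTo S B) f R := by
  have hzero : N.IsFlow (N.capFromTo S B) 0 := by
    refine ⟨fun e _ => ⟨le_rfl, ?_⟩, mulVec_zero _⟩
    unfold capFromTo
    split_ifs
    exacts [le_rfl, N.cap_nonneg e]
  obtain ⟨f, -, hf, hR⟩ := N.exists_isTightCut isClosed_univ (fun _ _ _ _ => trivial) hzero trivial
  exact ⟨f, hf, hR⟩

lemma isGreatest_maxFromTo {S : Finset E} (hS : S ⊆ N.Ein) (B : Finset E) :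
    IsGreatest (N.value '' {f | N.IsFlow (N.capFromTo S B) f}) (N.maxFromTo S B) := by
  obtain ⟨f, hf, R, hR⟩ := N.exists_isTightCut_capFromTo S B
  rw [hR.maxFromTo_eq hS hf]
  exact hR.isGreatest hf

/-- A tight cut of a maximum flow from `A` bounds what `F` routes through `A`. On `Ein \ A` the
flow `F` exceeds the capacities `capFromTo A B`, hence the `min` in `IsTightCut.sum_min_le`. -/
lemma sum_le_maxFromTo_of_subset {A S B : Finset E} (hA : A ⊆ S) (hS : S ⊆ N.Ein) {F : E → ℝ}
    (hF : N.IsFlow (N.capFromTo S B) F) : ∑ e ∈ A, F e ≤ N.maxFromTo A B := by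
  obtain ⟨h, hh, R, hR⟩ := N.exists_isTightCut_capFromTo A B
  have hF₀ : ∀ e, 0 ≤ F e := fun e => (hF.mem_Icc e).1
  have hmin : ∑ e ∈ N.Ein, min (F e) (N.capFromTo A B e) = ∑ e ∈ A, F e := by
    rw [← Finset.sum_sdiff (hA.trans hS), Finset.sum_eq_zero, zero_add]
    · refine Finset.sum_congr rfl fun e he => min_eq_left ?_
      have : e ∉ N.Eout := N.notMem_Eout_of_mem_Ein (hA.trans hS he)
      rw [show N.capFromTo A B e = N.cap e by simp [capFromTo, he, this]]
      exact (N.isFlow_capFromTo_iff.mp hF).1.2.1 e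
    · intro e he
      simp [capFromTo, Finset.mem_sdiff.mp he, hF₀ e]
  rw [hR.maxFromTo_eq (hA.trans hS) hh, ← hmin]
  exact hR.sum_min_le hh hF₀ hF.2 fun e he =>
    N.capFromTo_of_notMem_Ein he A S B ▸ (hF.mem_Icc e).2

/-- Start from a maximum flow from `A` and maximize the value without letting the flow through `A`
drop. -/
lemma exists_isFlow_value_eq_maxFromTo {A S B : Finset E} (hA : A ⊆ S) (hS : S ⊆ N.Ein) :
    ∃ F, N.IsFlow (N.capFromTo S B) F ∧ N.value F = N.maxFromTo S B ∧
      ∑ e ∈ A, F e = N.maxFromTo A B := by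
  obtain ⟨⟨h, hh, hval⟩, -⟩ := N.isGreatest_maxFromTo (hA.trans hS) B
  have hT : IsClosed {f : E → ℝ | N.maxFromTo A B ≤ ∑ e ∈ A, f e} :=
    isClosed_le continuous_const (continuous_finsetSum _ fun e _ => continuous_apply e)
  obtain ⟨F, hFT, hF, R, hR⟩ := N.exists_isTightCut hT
    (fun f g hf hfg => hf.trans (Finset.sum_le_sum fun e he => hfg e (hA.trans hS he)))
    (hh.mono (N.capFromTo_mono hA B))
    (by rw [Set.mem_ofPred_eq, ← hval, N.value_eq_sum_of_isFlow_capFromTo (hA.trans hS) hh])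
  exact ⟨F, hF, (hR.maxFromTo_eq hS hF).symm,
    le_antisymm (N.sum_le_maxFromTo_of_subset hA hS hF) hFT⟩

lemma sum_le_maxFromTo_union_sub {A1 A2 B : Finset E} (hA1 : A1 ⊆ N.Ein) (hA2 : A2 ⊆ N.Ein)
    (hdisj : Disjoint A1 A2) {f f' : E → ℝ} (hf : ∀ e, 0 ≤ f e) (hf' : ∀ e, 0 ≤ f' e)
    (hfeas : N.Feasible (f + f')) (hA2f' : ∑ e ∈ A2, f' e = N.maxFromTo A2 B)
    (hzero : ∀ e ∈ (N.Ein \ (A1 ∪ A2)) ∪ (N.Eout \ B), f e + f' e = 0) :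
    ∑ e ∈ A1, f e ≤ N.maxFromTo (A1 ∪ A2) B - N.maxFromTo A2 B := by
  have hS := Finset.union_subset hA1 hA2
  have hflow : N.IsFlow (N.capFromTo (A1 ∪ A2) B) (f + f') :=
    N.isFlow_capFromTo_iff.mpr ⟨hfeas, hzero⟩
  have hle := (N.isGreatest_maxFromTo hS B).2 ⟨_, hflow, rfl⟩
  rw [N.value_eq_sum_of_isFlow_capFromTo hS hflow, Finset.sum_union hdisj] at hle
  simp only [Pi.add_apply, Finset.sum_add_distrib] at hle
  linarith [Finset.sum_nonneg fun e (_ : e ∈ A1) => hf' e,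
    Finset.sum_nonneg fun e (_ : e ∈ A2) => hf e]

/-- For a maximum flow `F` from `A1 ∪ A2` routing `maxFromTo A2 B` through `A2`, take `f'` equal
to `F` on `A2` and to a scaled copy of `F` on `B`, and `f = F - f'`. -/
lemma exists_split_maxFromTo {A1 A2 B : Finset E} (hA1 : A1 ⊆ N.Ein) (hA2 : A2 ⊆ N.Ein)
    (hdisj : Disjoint A1 A2) (hB : B ⊆ N.Eout) :
    ∃ f f' : E → ℝ, (∀ e, 0 ≤ f e) ∧ (∀ e, 0 ≤ f' e) ∧ N.Feasible (f + f') ∧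
      ∑ e ∈ A2, f' e = N.maxFromTo A2 B ∧ ∑ e ∈ B, f' e = N.maxFromTo A2 B ∧
      (∀ e ∈ (N.Ein \ (A1 ∪ A2)) ∪ (N.Eout \ B), f e + f' e = 0) ∧
      N.maxFromTo (A1 ∪ A2) B - N.maxFromTo A2 B = ∑ e ∈ A1, f e := by
  have hS := Finset.union_subset hA1 hA2
  obtain ⟨F, hF, hFval, hFA2⟩ :=
    N.exists_isFlow_value_eq_maxFromTo (B := B) Finset.subset_union_right hS
  obtain ⟨hFeas, hFzero⟩ := N.isFlow_capFromTo_iff.mp hF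
  have hF₀ : ∀ e, 0 ≤ F e := hFeas.1
  have hFB : ∑ e ∈ B, F e = N.maxFromTo (A1 ∪ A2) B := by
    rw [← hFval, value, N.sum_Ein_eq_sum_Eout hF.2, ← Finset.sum_sdiff hB,
      Finset.sum_eq_zero fun e he => hFzero e (Finset.mem_union_right _ he), zero_add]
  have hFA1 : ∑ e ∈ A1, F e = N.maxFromTo (A1 ∪ A2) B - N.maxFromTo A2 B := by
    rw [← hFval, N.value_eq_sum_of_isFlow_capFromTo hS hF, Finset.sum_union hdisj, hFA2]
    ring
  obtain ⟨t, ⟨ht₀, ht₁⟩, ht⟩ := exists_mem_Icc_mul_eq (hFA2 ▸ Finset.sum_nonneg fun e _ => hF₀ e)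
    (show N.maxFromTo A2 B ≤ ∑ e ∈ B, F e by
      linarith [Finset.sum_nonneg fun e (_ : e ∈ A1) => hF₀ e])
  have hB_A2 : ∀ e ∈ B, e ∉ A2 := fun e he he' => N.notMem_Eout_of_mem_Ein (hA2 he') (hB he)
  set f' : E → ℝ := fun e => if e ∈ A2 then F e else if e ∈ B then t * F e else 0
  have hf' : ∀ e, 0 ≤ f' e ∧ f' e ≤ F e := by
    intro e
    simp only [f']
    split_ifs
    exacts [⟨hF₀ e, le_rfl⟩, ⟨mul_nonneg ht₀ (hF₀ e), mul_le_of_le_one_left (hF₀ e) ht₁⟩,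
      ⟨le_rfl, hF₀ e⟩]
  refine ⟨F - f', f', fun e => sub_nonneg.mpr (hf' e).2, fun e => (hf' e).1,
    by rwa [sub_add_cancel], ?_, ?_, fun e he => by simpa using hFzero e he, ?_⟩
  · rw [← hFA2]
    exact Finset.sum_congr rfl fun e he => if_pos he
  · rw [← ht, Finset.mul_sum]
    exact Finset.sum_congr rfl fun e he => by simp [f', hB_A2 e he, he]
  · rw [← hFA1]
    refine Finset.sum_congr rfl fun e he => ?_
    have : e ∉ B := fun h => N.notMem_Eout_of_mem_Ein (hA1 he) (hB h)
    simp [f', Finset.disjoint_left.mp hdisj he, this]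

end

/-- `maxFromToAft N (A1,B | A2,B) = maxFromTo N (A1 ∪ A2) B - maxFromTo N A2 B`. -/
theorem stmt5 (N : FlowNetwork V E) (A1 A2 B : Finset E)
    (hA1 : A1 ⊆ N.Ein) (hA2 : A2 ⊆ N.Ein) (hdisj : Disjoint A1 A2)
    (hB : B ⊆ N.Eout) :
    N.maxFromToAftIn A1 B A2 = N.maxFromTo (A1 ∪ A2) B - N.maxFromTo A2 B := by
  refine IsGreatest.csSup_eq ⟨N.exists_split_maxFromTo hA1 hA2 hdisj hB, ?_⟩
  rintro _ ⟨f, f', hf, hf', hfeas, hA2f', -, hzero, rfl⟩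
  exact N.sum_le_maxFromTo_union_sub hA1 hA2 hdisj hf hf' hfeas hA2f' hzero

end FlowNetwork
end

section
/- Let N = (G, c) be a flow network. For every feasible flow f and all A ⊆ Ein, B ⊆ Eout, it holds that −maxFromTo_N(Ein \ A, B) ≤ f(A) − f(B) ≤ maxFromTo_N(A, Eout \ B). -/
open Finset

/-!
The upper bound is the real content; the lower bound is the upper bound for the complements
`Ein \ A` and `Eout \ B`, because a conserved flow satisfies `f(Ein) = f(Eout)`.

For the upper bound, choose a subflow `0 ≤ g ≤ f` vanishing on `(Ein \ A) ∪ B` with `g(A)`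
maximal (the candidates form a compact set). If `g(A) < f(A) - f(B)`, the residual `h = f - g`
is a conserved flow with `h(B) < h(A)`. Conservation across the set of vertices reachable from
`A` along edges carrying `h`-flow yields an edge of `Eout \ B` carrying `h`-flow out of that
set, hence an augmenting path from `A` to `Eout \ B`; pushing a little flow along it
increases `g(A)`, a contradiction.
-/

open Filter Topology

lemma Finset.sum_le_sum_of_pos_imp_mem {ι M : Type*} [AddCommMonoid M] [PartialOrder M]
    [IsOrderedAddMonoid M] {s t : Finset ι} {h : ι → M} (hh : ∀ i, 0 ≤ h i)
    (hst : ∀ i ∈ s, 0 < h i → i ∈ t) : ∑ i ∈ s, h i ≤ ∑ i ∈ t, h i := by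
  classical
  calc ∑ i ∈ s, h i = ∑ i ∈ s.filter (fun i => 0 < h i), h i :=
        (sum_filter_of_ne fun i _ hi => (hh i).lt_of_ne' hi).symm
    _ ≤ ∑ i ∈ t, h i := sum_le_sum_of_subset_of_nonneg
        (fun i hi => hst i (mem_filter.1 hi).1 (mem_filter.1 hi).2) fun i _ _ => hh i

lemma exists_pos_mul_le {ι : Type*} [Finite ι] {d h : ι → ℝ} (hh : ∀ i, 0 ≤ h i)
    (hdh : ∀ i, 0 < d i → 0 < h i) : ∃ ε > 0, ∀ i, ε * d i ≤ h i := by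
  have hev : ∀ i, ∀ᶠ ε in 𝓝[>] (0 : ℝ), ε * d i ≤ h i := fun i => by
    rcases le_or_gt (d i) 0 with hd | hd
    · filter_upwards [self_mem_nhdsWithin] with ε hε
      exact (mul_nonpos_of_nonneg_of_nonpos (le_of_lt hε) hd).trans (hh i)
    · have hlim : Tendsto (fun ε => ε * d i) (𝓝[>] 0) (𝓝 0) :=
        ((continuous_mul_const (d i)).tendsto' 0 0 (zero_mul _)).mono_left nhdsWithin_le_nhds
      exact (hlim.eventually (gt_mem_nhds (hdh i hd))).mono fun _ => le_of_lt
  obtain ⟨ε, hε, hεpos⟩ := ((eventually_all.2 hev).and self_mem_nhdsWithin).exists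
  exact ⟨ε, hεpos, hε⟩

lemma isClosed_setOf_forall_mem_eq_zero {ι M : Type*} [TopologicalSpace M] [T2Space M] [Zero M]
    (Z : Set ι) : IsClosed {g : ι → M | ∀ i ∈ Z, g i = 0} := by
  simp only [Set.ofPred_forall]
  exact isClosed_biInter fun i _ => isClosed_eq (continuous_apply i) continuous_const

namespace FlowNetwork

variable {V E : Type} [Fintype V] [Fintype E] [DecidableEq V] [DecidableEq E]
  {N : FlowNetwork V E}

variable (N) in
def inflow (g : E → ℝ) (v : V) : ℝ :=
  ∑ e ∈ (N.Ein ∪ N.Eint).filter (fun e => N.head e = v), g e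

variable (N) in
def outflow (g : E → ℝ) (v : V) : ℝ :=
  ∑ e ∈ (N.Eout ∪ N.Eint).filter (fun e => N.tail e = v), g e

variable (N) in
def Conserves (g : E → ℝ) : Prop :=
  ∀ v, N.inflow g v = N.outflow g v

lemma Feasible.conserves {f : E → ℝ} (hf : N.Feasible f) : N.Conserves f :=
  hf.2.2

lemma inflow_add (g g' : E → ℝ) (v : V) :
    N.inflow (g + g') v = N.inflow g v + N.inflow g' v :=
  sum_add_distrib

lemma outflow_add (g g' : E → ℝ) (v : V) :
    N.outflow (g + g') v = N.outflow g v + N.outflow g' v :=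
  sum_add_distrib

lemma inflow_single (e : E) (v : V) :
    N.inflow (Pi.single e 1) v = if e ∈ N.Ein ∪ N.Eint ∧ N.head e = v then 1 else 0 := by
  simp [inflow, sum_pi_single']

lemma outflow_single (e : E) (v : V) :
    N.outflow (Pi.single e 1) v = if e ∈ N.Eout ∪ N.Eint ∧ N.tail e = v then 1 else 0 := by
  simp [outflow, sum_pi_single']

lemma Conserves.add {g g' : E → ℝ} (hg : N.Conserves g) (hg' : N.Conserves g') :
    N.Conserves (g + g') := fun v => by
  rw [inflow_add, outflow_add, hg v, hg' v]

lemma Conserves.sub {g g' : E → ℝ} (hg : N.Conserves g) (hg' : N.Conserves g') :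
    N.Conserves (g - g') := fun v => by
  simp only [inflow, outflow, Pi.sub_apply, sum_sub_distrib]
  exact congrArg₂ (· - ·) (hg v) (hg' v)

lemma Conserves.smul {g : E → ℝ} (hg : N.Conserves g) (c : ℝ) :
    N.Conserves (c • g) := fun v => by
  simp only [inflow, outflow, Pi.smul_apply, smul_eq_mul, ← mul_sum]
  exact congrArg (c * ·) (hg v)

lemma Conserves.sum_head_mem_eq {g : E → ℝ} (hg : N.Conserves g) (S : Finset V) :
    ∑ e ∈ (N.Ein ∪ N.Eint).filter (fun e => N.head e ∈ S), g e =
      ∑ e ∈ (N.Eout ∪ N.Eint).filter (fun e => N.tail e ∈ S), g e := by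
  rw [← sum_fiberwise_eq_sum_filter, ← sum_fiberwise_eq_sum_filter]
  exact sum_congr rfl fun v _ => hg v

lemma Conserves.sum_in_eq_sum_out {g : E → ℝ} (hg : N.Conserves g) :
    ∑ e ∈ N.Ein, g e = ∑ e ∈ N.Eout, g e := by
  have h := hg.sum_head_mem_eq univ
  simp only [mem_univ, filter_true] at h
  rw [sum_union N.disj_in_int, sum_union N.disj_out_int] at h
  linarith

variable (N) in
def Reach (h : E → ℝ) : V → V → Prop :=
  Relation.ReflTransGen fun a b => ∃ e ∈ N.Eint, 0 < h e ∧ N.tail e = a ∧ N.head e = b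

lemma exists_unitFlow_of_reach {h : E → ℝ} {e₀ : E} (he₀ : e₀ ∈ N.Ein) {v : V}
    (hv : N.Reach h (N.head e₀) v) :
    ∃ d : E → ℝ, 0 ≤ d ∧ d e₀ = 1 ∧
      (∀ e, d e ≠ 0 → e = e₀ ∨ e ∈ N.Eint ∧ 0 < h e) ∧
      ∀ x, N.inflow d x = N.outflow d x + if v = x then 1 else 0 := by
  induction hv with
  | refl =>
    have hout : e₀ ∉ N.Eout ∪ N.Eint := by
      simp [disjoint_left.1 N.disj_in_out he₀, disjoint_left.1 N.disj_in_int he₀]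
    refine ⟨Pi.single e₀ 1, Pi.single_nonneg.2 zero_le_one, Pi.single_eq_same .., fun e he => ?_,
      fun x => ?_⟩
    · by_contra hne
      exact he (Pi.single_eq_of_ne (by tauto) _)
    · simp [inflow_single, outflow_single, he₀, hout]
  | tail _ hstep ih =>
    obtain ⟨e, he, hpos, rfl, rfl⟩ := hstep
    obtain ⟨d, hd0, hde₀, hdsupp, hdbal⟩ := ih
    have hne : e₀ ≠ e := fun heq => disjoint_left.1 N.disj_in_int he₀ (heq ▸ he)
    refine ⟨d + Pi.single e 1, add_nonneg hd0 (Pi.single_nonneg.2 zero_le_one),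
      by simp [hde₀, hne], fun e' he' => ?_, fun x => ?_⟩
    · by_cases hee' : e' = e
      · exact .inr (hee' ▸ ⟨he, hpos⟩)
      · exact hdsupp e' (by simpa [Pi.single_apply, hee'] using he')
    · rw [inflow_add, outflow_add, hdbal, inflow_single, outflow_single]
      simp only [mem_union, he, or_true, true_and]

lemma exists_reach_of_sum_lt {h : E → ℝ} (hh : ∀ e, 0 ≤ h e) (hcons : N.Conserves h)
    {A B : Finset E} (hA : A ⊆ N.Ein) (hlt : ∑ e ∈ B, h e < ∑ e ∈ A, h e) :
    ∃ e₀ ∈ A, 0 < h e₀ ∧ ∃ e₁ ∈ N.Eout \ B, 0 < h e₁ ∧ N.Reach h (N.head e₀) (N.tail e₁) := by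
  classical
  set S : Finset V := univ.filter fun v => ∃ e ∈ A, 0 < h e ∧ N.Reach h (N.head e) v
  have hS : ∀ v, v ∈ S ↔ ∃ e ∈ A, 0 < h e ∧ N.Reach h (N.head e) v := by simp [S]
  have hcut := hcons.sum_head_mem_eq S
  rw [filter_union, filter_union,
    sum_union (N.disj_in_int.mono (filter_subset _ _) (filter_subset _ _)),
    sum_union (N.disj_out_int.mono (filter_subset _ _) (filter_subset _ _))] at hcut
  have hA_le : ∑ e ∈ A, h e ≤ ∑ e ∈ N.Ein.filter (fun e => N.head e ∈ S), h e :=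
    sum_le_sum_of_pos_imp_mem hh fun e he hpos =>
      mem_filter.2 ⟨hA he, (hS _).2 ⟨e, he, hpos, .refl⟩⟩
  have hint_le : ∑ e ∈ N.Eint.filter (fun e => N.tail e ∈ S), h e ≤
      ∑ e ∈ N.Eint.filter (fun e => N.head e ∈ S), h e :=
    sum_le_sum_of_pos_imp_mem hh fun e he hpos => by
      obtain ⟨he, htail⟩ := mem_filter.1 he
      obtain ⟨e₀, he₀, hpos₀, hr⟩ := (hS _).1 htail
      exact mem_filter.2 ⟨he, (hS _).2 ⟨e₀, he₀, hpos₀, hr.tail ⟨e, he, hpos, rfl, rfl⟩⟩⟩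
  have hout_le : ∑ e ∈ N.Eout.filter (fun e => N.tail e ∈ S), h e ≤
      ∑ e ∈ B, h e + ∑ e ∈ (N.Eout \ B).filter (fun e => N.tail e ∈ S), h e := by
    rw [← sum_union (disjoint_sdiff.mono_right (filter_subset _ _))]
    refine sum_le_sum_of_pos_imp_mem hh fun e he _ => ?_
    by_cases heB : e ∈ B
    · exact mem_union_left _ heB
    · simp only [mem_filter] at he
      simp [he, heB]
  obtain ⟨e₁, he₁, hpos₁⟩ : ∃ e ∈ (N.Eout \ B).filter (fun e => N.tail e ∈ S), 0 < h e := by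
    have hpos : ∑ e ∈ (N.Eout \ B).filter (fun e => N.tail e ∈ S), (0 : E → ℝ) e <
        ∑ e ∈ (N.Eout \ B).filter (fun e => N.tail e ∈ S), h e := by
      simp only [Pi.zero_apply, sum_const_zero]
      linarith
    exact exists_lt_of_sum_lt hpos
  obtain ⟨he₁, htail⟩ := mem_filter.1 he₁
  obtain ⟨e₀, he₀, hpos₀, hr⟩ := (hS _).1 htail
  exact ⟨e₀, he₀, hpos₀, e₁, he₁, hpos₁, hr⟩

lemma exists_augmentingFlow {h : E → ℝ} (hh : ∀ e, 0 ≤ h e) (hcons : N.Conserves h)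
    {A B : Finset E} (hA : A ⊆ N.Ein) (hB : B ⊆ N.Eout) (hlt : ∑ e ∈ B, h e < ∑ e ∈ A, h e) :
    ∃ d : E → ℝ, N.Conserves d ∧ 0 ≤ d ∧ (∀ e, 0 < d e → 0 < h e) ∧
      (∀ e ∈ (N.Ein \ A) ∪ B, d e = 0) ∧ ∑ e ∈ A, d e = 1 := by
  obtain ⟨e₀, he₀, hpos₀, e₁, he₁, hpos₁, hreach⟩ := exists_reach_of_sum_lt hh hcons hA hlt
  obtain ⟨he₁, he₁B⟩ := mem_sdiff.1 he₁
  obtain ⟨d, hd0, hde₀, hdsupp, hdbal⟩ := exists_unitFlow_of_reach (hA he₀) hreach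
  have hsupp : ∀ e, (d + Pi.single e₁ 1 : E → ℝ) e ≠ 0 →
      e = e₀ ∨ e ∈ N.Eint ∧ 0 < h e ∨ e = e₁ := fun e he => by
    by_cases hee₁ : e = e₁
    · exact .inr (.inr hee₁)
    · exact (hdsupp e (by simpa [Pi.single_apply, hee₁] using he)).elim .inl (.inr ∘ .inl)
  have hne : e₀ ≠ e₁ := fun heq => disjoint_left.1 N.disj_in_out (hA he₀) (heq ▸ he₁)
  refine ⟨d + Pi.single e₁ 1, fun x => ?_, add_nonneg hd0 (Pi.single_nonneg.2 zero_le_one),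
    fun e he => ?_, fun e he => ?_, ?_⟩
  · rw [inflow_add, outflow_add, hdbal, inflow_single, outflow_single]
    have : e₁ ∉ N.Ein ∪ N.Eint := by
      simp [disjoint_right.1 N.disj_in_out he₁, disjoint_left.1 N.disj_out_int he₁]
    simp [he₁, this, add_comm]
  · rcases hsupp e he.ne' with rfl | ⟨-, hpos⟩ | rfl <;> assumption
  · by_contra hde
    rcases hsupp e hde with rfl | ⟨hint, -⟩ | rfl <;>
      grind [disjoint_left.1 N.disj_in_out, disjoint_left.1 N.disj_in_int,
        disjoint_left.1 N.disj_out_int]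
  · rw [sum_eq_single_of_mem e₀ he₀ fun e he hne' => ?_]
    · simp [hde₀, hne]
    · by_contra hde
      rcases hsupp e hde with rfl | ⟨hint, -⟩ | rfl <;>
        grind [disjoint_left.1 N.disj_in_out, disjoint_left.1 N.disj_in_int]

lemma isClosed_setOf_conserves : IsClosed {g : E → ℝ | N.Conserves g} := by
  simp only [Conserves, inflow, outflow, Set.ofPred_forall]
  exact isClosed_iInter fun v => isClosed_eq (by fun_prop) (by fun_prop)

lemma exists_subflow_sum_sub_sum_le {f : E → ℝ} (hf0 : 0 ≤ f) (hf : N.Conserves f)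
    {A B : Finset E} (hA : A ⊆ N.Ein) (hB : B ⊆ N.Eout) :
    ∃ g ∈ Set.Icc 0 f, N.Conserves g ∧ (∀ e ∈ (N.Ein \ A) ∪ B, g e = 0) ∧
      ∑ e ∈ A, f e - ∑ e ∈ B, f e ≤ ∑ e ∈ A, g e := by
  set K := Set.Icc 0 f ∩ {g | N.Conserves g} ∩ {g | ∀ e ∈ (N.Ein \ A) ∪ B, g e = 0}
  have hK : IsCompact K := (isCompact_Icc.inter_right isClosed_setOf_conserves).inter_right <| by
    simpa only [mem_coe] using
      isClosed_setOf_forall_mem_eq_zero (M := ℝ) (↑((N.Ein \ A) ∪ B : Finset E) : Set E)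
  have h0K : (0 : E → ℝ) ∈ K :=
    ⟨⟨⟨le_rfl, hf0⟩, fun v => by simp [inflow, outflow]⟩, fun _ _ => rfl⟩
  obtain ⟨g, ⟨⟨hgf, hg⟩, hgZ⟩, hmax⟩ :=
    hK.exists_isMaxOn ⟨0, h0K⟩ (continuous_finsetSum A fun e _ => continuous_apply e).continuousOn
  refine ⟨g, hgf, hg, hgZ, not_lt.1 fun hlt => ?_⟩
  have hres : 0 ≤ f - g := sub_nonneg.2 hgf.2
  have hgB : ∑ e ∈ B, g e = 0 := sum_eq_zero fun e he => hgZ e (mem_union_right _ he)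
  obtain ⟨d, hd, hd0, hdpos, hdZ, hdA⟩ := exists_augmentingFlow hres (hf.sub hg) hA hB
    (by simp only [Pi.sub_apply, sum_sub_distrib]; linarith)
  obtain ⟨ε, hε, hεd⟩ := exists_pos_mul_le hres hdpos
  have hK' : g + ε • d ∈ K := by
    refine ⟨⟨⟨?_, fun e => ?_⟩, hg.add (hd.smul ε)⟩, fun e he => by simp [hgZ e he, hdZ e he]⟩
    · exact add_nonneg hgf.1 (smul_nonneg hε.le hd0)
    · have := hεd e
      simp only [Pi.add_apply, Pi.smul_apply, Pi.sub_apply, smul_eq_mul] at this ⊢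
      linarith
  have := isMaxOn_iff.1 hmax _ hK'
  simp only [Pi.add_apply, Pi.smul_apply, smul_eq_mul, sum_add_distrib, ← mul_sum, hdA] at this
  linarith

lemma sum_le_maxFromTo {g : E → ℝ} (hg : N.Feasible g) {A B : Finset E}
    (hgZ : ∀ e ∈ (N.Ein \ A) ∪ (N.Eout \ B), g e = 0) : ∑ e ∈ A, g e ≤ N.maxFromTo A B :=
  le_csSup ⟨∑ e ∈ A, N.cap e, by rintro _ ⟨f, hf, -, rfl⟩; exact sum_le_sum fun e _ => hf.2.1 e⟩
    ⟨g, hg, hgZ, rfl⟩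

lemma sum_sub_sum_le_maxFromTo {f : E → ℝ} (hf : N.Feasible f) {A B : Finset E}
    (hA : A ⊆ N.Ein) (hB : B ⊆ N.Eout) :
    ∑ e ∈ A, f e - ∑ e ∈ B, f e ≤ N.maxFromTo A (N.Eout \ B) := by
  obtain ⟨g, hgf, hg, hgZ, hle⟩ := exists_subflow_sum_sub_sum_le hf.1 hf.conserves hA hB
  refine hle.trans (sum_le_maxFromTo ⟨hgf.1, fun e => (hgf.2 e).trans (hf.2.1 e), hg⟩ ?_)
  rwa [Finset.sdiff_sdiff_eq_self hB]

/-- for every feasible flow `f`, and `A ⊆ Ein`, `B ⊆ Eout`: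
`-maxFromTo N (Ein \ A) B ≤ f(A) - f(B) ≤ maxFromTo N A (Eout \ B)`. -/
theorem stmt7 (N : FlowNetwork V E) (f : E → ℝ) (hf : N.Feasible f)
    (A B : Finset E) (hA : A ⊆ N.Ein) (hB : B ⊆ N.Eout) :
    -(N.maxFromTo (N.Ein \ A) B) ≤ ∑ e ∈ A, f e - ∑ e ∈ B, f e ∧
    ∑ e ∈ A, f e - ∑ e ∈ B, f e ≤ N.maxFromTo A (N.Eout \ B) := by
  refine ⟨?_, sum_sub_sum_le_maxFromTo hf hA hB⟩
  have hcompl :=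
    sum_sub_sum_le_maxFromTo (A := N.Ein \ A) (B := N.Eout \ B) hf sdiff_subset sdiff_subset
  rw [Finset.sdiff_sdiff_eq_self hB] at hcompl
  have hin := sum_sdiff hA (f := f)
  have hout := sum_sdiff hB (f := f)
  have hbal := hf.conserves.sum_in_eq_sum_out
  linarith

end FlowNetwork
end

section
/- Let N = (G, c) be a flow network and define τ* by τ*(A, B) := [−maxFromTo_N(Ein \ A, B), maxFromTo_N(A, Eout \ B)] for all A ⊆ Ein, B ⊆ Eout. Then τ* is a well-defined typing (i.e., −maxFromTo_N(Ein \ A, B) ≤ maxFromTo_N(A, Eout \ B) for all A, B) and τ* is a principal typing for N. -/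
/-!
Completeness is weak duality plus max-flow min-cut: summing conservation over a vertex set `S`
bounds `f(A) - f(B)` by the capacity of the cut `S` of the problem from `A` to `Eout \ B`, and
some cut has capacity exactly `maxFromTo A (Eout \ B)`; the lower bound is the same applied to
`Ein \ A` and `Eout \ B`, as `f(Ein) = f(Eout)`. For max-flow min-cut, take a maximum flow `f`
(it exists by compactness) and let `S` be the set of vertices at which some change of `f` that
increases its value can leave a surplus. Scaling such a change down makes room to push the
surplus along any residual edge, and the surplus cannot reach an unsaturated output edge, as `f`
would not be maximal; so `f` saturates the cut `S`.

Soundness: lower the capacities of the input and output edges to `g`. The typing bounds at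
`A = {e ∈ Ein | head e ∈ S}`, `B = {e ∈ Eout | tail e ∈ S}` show that every cut of the new
network has capacity at least `g(Ein)`, so a maximum flow of it saturates every input edge,
and, since `g(Ein) = g(Eout)`, every output edge.
-/

open Finset

namespace FlowNetwork

variable {V E : Type} [Fintype V] [Fintype E] [DecidableEq V] [DecidableEq E]

/-- A typing for `N` is (unbundled) a pair of maps `lo hi` giving, for each
`A ⊆ Ein` and `B ⊆ Eout`, the closed real interval `[lo A B, hi A B]`. -/
def IsTyping (N : FlowNetwork V E) (lo hi : Finset E → Finset E → ℝ) : Prop :=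
  ∀ A ⊆ N.Ein, ∀ B ⊆ N.Eout, lo A B ≤ hi A B

/-- An IO assignment `g` (a nonnegative function on `Ein ∪ Eout`, modelled as a
total function whose values elsewhere are irrelevant) satisfies the typing
`(lo, hi)` if `g(A) - g(B) ∈ [lo A B, hi A B]` for all `A ⊆ Ein`, `B ⊆ Eout`. -/
def SatisfiesTyping (N : FlowNetwork V E) (lo hi : Finset E → Finset E → ℝ)
    (g : E → ℝ) : Prop :=
  ∀ A ⊆ N.Ein, ∀ B ⊆ N.Eout,
    lo A B ≤ ∑ e ∈ A, g e - ∑ e ∈ B, g e ∧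
    ∑ e ∈ A, g e - ∑ e ∈ B, g e ≤ hi A B

/-- A typing is principal for `N` if it is complete (every feasible flow satisfies it)
and sound (every IO assignment satisfying it extends to a feasible flow). -/
def PrincipalTyping (N : FlowNetwork V E) (lo hi : Finset E → Finset E → ℝ) : Prop :=
  N.IsTyping lo hi ∧
  (∀ f : E → ℝ, N.Feasible f → N.SatisfiesTyping lo hi f) ∧
  (∀ g : E → ℝ, (∀ e ∈ N.Ein ∪ N.Eout, 0 ≤ g e) → N.SatisfiesTyping lo hi g →
    ∃ f : E → ℝ, N.Feasible f ∧ ∀ e ∈ N.Ein ∪ N.Eout, f e = g e)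

def netInflow (N : FlowNetwork V E) : (E → ℝ) →ₗ[ℝ] V → ℝ where
  toFun f v := ∑ e ∈ (N.Ein ∪ N.Eint).filter (fun e => N.head e = v), f e -
    ∑ e ∈ (N.Eout ∪ N.Eint).filter (fun e => N.tail e = v), f e
  map_add' f g := by
    ext v
    simp only [Pi.add_apply, sum_add_distrib]
    ring
  map_smul' c f := by
    ext v
    simp only [Pi.smul_apply, smul_eq_mul, ← mul_sum, RingHom.id_apply]
    ring

lemma feasible_iff {N : FlowNetwork V E} {f : E → ℝ} :
    N.Feasible f ↔ (∀ e, 0 ≤ f e) ∧ (∀ e, f e ≤ N.cap e) ∧ N.netInflow f = 0 := by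
  simp only [Feasible, funext_iff, netInflow, LinearMap.coe_mk, AddHom.coe_mk, Pi.zero_apply,
    sub_eq_zero]

lemma netInflow_single (N : FlowNetwork V E) (e : E) (c : ℝ) (v : V) :
    N.netInflow (Pi.single e c) v =
      (if e ∈ N.Ein ∪ N.Eint ∧ N.head e = v then c else 0) -
        if e ∈ N.Eout ∪ N.Eint ∧ N.tail e = v then c else 0 := by
  simp [netInflow, sum_pi_single']

lemma netInflow_single_of_mem_Eint (N : FlowNetwork V E) {e : E} (he : e ∈ N.Eint) (c : ℝ) :
    N.netInflow (Pi.single e c) = Pi.single (N.head e) c - Pi.single (N.tail e) c := by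
  ext v
  simp [netInflow_single, he, Pi.single_apply, eq_comm]

lemma sum_netInflow (N : FlowNetwork V E) (D : E → ℝ) (S : Finset V) :
    ∑ v ∈ S, N.netInflow D v =
      ∑ e ∈ N.Ein.filter (fun e => N.head e ∈ S), D e -
        ∑ e ∈ N.Eout.filter (fun e => N.tail e ∈ S), D e +
      (∑ e ∈ N.Eint.filter (fun e => N.tail e ∉ S ∧ N.head e ∈ S), D e -
        ∑ e ∈ N.Eint.filter (fun e => N.tail e ∈ S ∧ N.head e ∉ S), D e) := by
  have hint : ∑ e ∈ N.Eint.filter (fun e => N.head e ∈ S), D e -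
      ∑ e ∈ N.Eint.filter (fun e => N.tail e ∈ S), D e =
      ∑ e ∈ N.Eint.filter (fun e => N.tail e ∉ S ∧ N.head e ∈ S), D e -
        ∑ e ∈ N.Eint.filter (fun e => N.tail e ∈ S ∧ N.head e ∉ S), D e := by
    simp only [sum_filter, ← sum_sub_distrib]
    refine sum_congr rfl fun e _ => ?_
    split_ifs <;> simp_all
  simp only [netInflow, LinearMap.coe_mk, AddHom.coe_mk]
  rw [sum_sub_distrib, sum_fiberwise_eq_sum_filter, sum_fiberwise_eq_sum_filter, filter_union,
    filter_union, sum_union (disjoint_filter_filter N.disj_in_int),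
    sum_union (disjoint_filter_filter N.disj_out_int)]
  linarith

lemma Feasible.sum_Ein_eq_sum_Eout {N : FlowNetwork V E} {f : E → ℝ} (hf : N.Feasible f) :
    ∑ e ∈ N.Ein, f e = ∑ e ∈ N.Eout, f e := by
  have h := N.sum_netInflow f univ
  rw [(feasible_iff.mp hf).2.2] at h
  simp only [Pi.zero_apply, sum_const_zero, mem_univ, filter_true, not_true_eq_false, and_true,
    filter_false, sum_empty, and_false, sub_self, add_zero] at h
  linarith

/-- `S` is the source side of the cut. -/
def cutCap (N : FlowNetwork V E) (A B : Finset E) (S : Finset V) : ℝ :=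
  ∑ e ∈ A.filter (fun e => N.head e ∉ S), N.cap e +
    ∑ e ∈ B.filter (fun e => N.tail e ∈ S), N.cap e +
    ∑ e ∈ N.Eint.filter (fun e => N.tail e ∈ S ∧ N.head e ∉ S), N.cap e

@[simp]
lemma cutCap_empty (N : FlowNetwork V E) (A B : Finset E) :
    N.cutCap A B ∅ = ∑ e ∈ A, N.cap e := by
  simp [cutCap]

@[simp]
lemma cutCap_univ (N : FlowNetwork V E) (A B : Finset E) :
    N.cutCap A B univ = ∑ e ∈ B, N.cap e := by
  simp [cutCap]

lemma Feasible.sum_sub_sum_le_cutCap {N : FlowNetwork V E} {f : E → ℝ} (hf : N.Feasible f)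
    {X Y : Finset E} (hX : X ⊆ N.Ein) (hY : Y ⊆ N.Eout) (S : Finset V) :
    ∑ e ∈ X, f e - ∑ e ∈ Y, f e ≤ N.cutCap X (N.Eout \ Y) S := by
  obtain ⟨hf0, hcap, hcons⟩ := feasible_iff.mp hf
  have hbal := N.sum_netInflow f S
  simp only [hcons, Pi.zero_apply, sum_const_zero] at hbal
  have hX_split : ∑ e ∈ X.filter (fun e => N.head e ∈ S), f e +
      ∑ e ∈ X.filter (fun e => N.head e ∉ S), f e = ∑ e ∈ X, f e :=
    sum_filter_add_sum_filter_not _ _ _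
  have hX_in : ∑ e ∈ X.filter (fun e => N.head e ∈ S), f e ≤
      ∑ e ∈ N.Ein.filter (fun e => N.head e ∈ S), f e :=
    sum_le_sum_of_subset_of_nonneg (filter_subset_filter _ hX) fun e _ _ => hf0 e
  have hY_out : ∑ e ∈ N.Eout.filter (fun e => N.tail e ∈ S), f e ≤
      ∑ e ∈ Y, f e + ∑ e ∈ (N.Eout \ Y).filter (fun e => N.tail e ∈ S), f e := by
    rw [sum_filter, sum_filter, ← sum_sdiff hY, add_comm]
    gcongr with e
    split_ifs
    exacts [le_rfl, hf0 e]
  have hcut_in : 0 ≤ ∑ e ∈ N.Eint.filter (fun e => N.tail e ∉ S ∧ N.head e ∈ S), f e :=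
    sum_nonneg fun e _ => hf0 e
  have hcap_sum : ∀ T : Finset E, ∑ e ∈ T, f e ≤ ∑ e ∈ T, N.cap e :=
    fun T => sum_le_sum fun e _ => hcap e
  have hcap_in := hcap_sum (X.filter (fun e => N.head e ∉ S))
  have hcap_out := hcap_sum ((N.Eout \ Y).filter (fun e => N.tail e ∈ S))
  have hcap_int := hcap_sum (N.Eint.filter (fun e => N.tail e ∈ S ∧ N.head e ∉ S))
  rw [cutCap]
  linarith

def IsFlowFromTo (N : FlowNetwork V E) (A B : Finset E) (f : E → ℝ) : Prop :=
  N.Feasible f ∧ ∀ e ∈ (N.Ein \ A) ∪ (N.Eout \ B), f e = 0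

lemma isFlowFromTo_zero (N : FlowNetwork V E) (A B : Finset E) : N.IsFlowFromTo A B 0 :=
  ⟨feasible_iff.mpr ⟨fun _ => le_rfl, N.cap_nonneg, map_zero _⟩, fun _ _ => rfl⟩

lemma le_maxFromTo {N : FlowNetwork V E} {A B : Finset E} {f : E → ℝ}
    (hf : N.IsFlowFromTo A B f) : ∑ e ∈ A, f e ≤ N.maxFromTo A B :=
  le_csSup ⟨∑ e ∈ A, N.cap e, by
    rintro _ ⟨g, hg, -, rfl⟩
    exact sum_le_sum fun e _ => hg.2.1 e⟩ ⟨f, hf.1, hf.2, rfl⟩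

lemma maxFromTo_le {N : FlowNetwork V E} {A B : Finset E} {c : ℝ}
    (h : ∀ f, N.IsFlowFromTo A B f → ∑ e ∈ A, f e ≤ c) : N.maxFromTo A B ≤ c :=
  csSup_le ⟨0, 0, (N.isFlowFromTo_zero A B).1, fun _ _ => rfl, by simp⟩ <| by
    rintro _ ⟨f, hf, hv, rfl⟩
    exact h f ⟨hf, hv⟩

lemma maxFromTo_nonneg (N : FlowNetwork V E) (A B : Finset E) : 0 ≤ N.maxFromTo A B := by
  simpa using le_maxFromTo (N.isFlowFromTo_zero A B)

lemma maxFromTo_le_cutCap (N : FlowNetwork V E) {A B : Finset E} (hA : A ⊆ N.Ein)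
    (hB : B ⊆ N.Eout) (S : Finset V) : N.maxFromTo A B ≤ N.cutCap A B S :=
  maxFromTo_le fun f hf => by
    have h := hf.1.sum_sub_sum_le_cutCap hA (sdiff_subset (t := B)) S
    rwa [Finset.sdiff_sdiff_eq_self hB, sum_eq_zero fun e he => hf.2 e (mem_union_right _ he),
      sub_zero] at h

lemma isCompact_setOf_isFlowFromTo (N : FlowNetwork V E) (A B : Finset E) :
    IsCompact {f : E → ℝ | N.IsFlowFromTo A B f} := by
  have hclosed : IsClosed {f : E → ℝ | N.IsFlowFromTo A B f} := by
    simp only [IsFlowFromTo, feasible_iff, Set.ofPred_and, Set.ofPred_forall]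
    refine ((isClosed_iInter fun e => isClosed_le continuous_const (continuous_apply e)).inter
      ((isClosed_iInter fun e => isClosed_le (continuous_apply e) continuous_const).inter
      (isClosed_eq N.netInflow.continuous_of_finiteDimensional continuous_const))).inter
      (isClosed_iInter fun e => isClosed_iInter fun _ =>
        isClosed_eq (continuous_apply e) continuous_const)
  refine (isCompact_univ_pi fun e => isCompact_Icc (a := 0) (b := N.cap e)).of_isClosed_subset
    hclosed fun f hf e _ => ?_
  exact ⟨hf.1.1 e, hf.1.2.1 e⟩

lemma exists_isFlowFromTo_sum_eq_maxFromTo (N : FlowNetwork V E) (A B : Finset E) :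
    ∃ f, N.IsFlowFromTo A B f ∧ ∑ e ∈ A, f e = N.maxFromTo A B := by
  obtain ⟨f, hf, hmax⟩ := (N.isCompact_setOf_isFlowFromTo A B).exists_isMaxOn
    ⟨0, N.isFlowFromTo_zero A B⟩ (continuous_finsetSum A fun e _ => continuous_apply e).continuousOn
  exact ⟨f, hf, le_antisymm (le_maxFromTo hf) (maxFromTo_le fun g hg => hmax hg)⟩

def WithinCap (N : FlowNetwork V E) (f : E → ℝ) : Prop :=
  ∀ e, 0 ≤ f e ∧ f e ≤ N.cap e

lemma Feasible.withinCap {N : FlowNetwork V E} {f : E → ℝ} (hf : N.Feasible f) :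
    N.WithinCap f :=
  fun e => ⟨hf.1 e, hf.2.1 e⟩

lemma WithinCap.add_smul {N : FlowNetwork V E} {f D : E → ℝ} (hf : N.WithinCap f)
    (hfD : N.WithinCap (f + D)) {s : ℝ} (hs0 : 0 ≤ s) (hs1 : s ≤ 1) :
    N.WithinCap (f + s • D) := by
  intro e
  obtain ⟨h0, h1⟩ := hf e
  obtain ⟨h2, h3⟩ := hfD e
  simp only [Pi.add_apply, Pi.smul_apply, smul_eq_mul] at h2 h3 ⊢
  constructor <;> nlinarith

lemma WithinCap.exists_push_forward {N : FlowNetwork V E} {f D : E → ℝ} (hf : N.WithinCap f)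
    (hfD : N.WithinCap (f + D)) {d : ℝ} (hd : 0 < d) {e : E} (he : f e < N.cap e) :
    ∃ s > 0, N.WithinCap (f + (s • D + (s * d) • Pi.single e 1)) := by
  obtain ⟨hfe, -⟩ := hf e
  obtain ⟨-, hfDe⟩ := hfD e
  set s := (N.cap e - f e) / (N.cap e + d)
  have hs0 : 0 < s := div_pos (by linarith) (by linarith)
  have hs1 : s ≤ 1 := (div_le_one (by linarith)).mpr (by linarith)
  have hs : s * (N.cap e + d) = N.cap e - f e := div_mul_cancel₀ _ (by linarith)
  refine ⟨s, hs0, fun e' => ?_⟩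
  have hconv := hf.add_smul hfD hs0.le hs1 e'
  rcases eq_or_ne e' e with rfl | hne
  · simp only [Pi.add_apply, Pi.smul_apply, smul_eq_mul, Pi.single_eq_same] at hconv hfDe ⊢
    constructor <;> nlinarith
  · simpa [Pi.single_eq_of_ne hne] using hconv

lemma WithinCap.exists_push_backward {N : FlowNetwork V E} {f D : E → ℝ} (hf : N.WithinCap f)
    (hfD : N.WithinCap (f + D)) {d : ℝ} (hd : 0 < d) {e : E} (he : 0 < f e) :
    ∃ s > 0, N.WithinCap (f + (s • D + (-(s * d)) • Pi.single e 1)) := by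
  obtain ⟨hfDe, -⟩ := hfD e
  set s := f e / (f e + d)
  have hs0 : 0 < s := div_pos he (by linarith)
  have hs1 : s ≤ 1 := (div_le_one (by linarith)).mpr (by linarith)
  have hs : s * (f e + d) = f e := div_mul_cancel₀ _ (by linarith)
  refine ⟨s, hs0, fun e' => ?_⟩
  have hconv := hf.add_smul hfD hs0.le hs1 e'
  rcases eq_or_ne e' e with rfl | hne
  · simp only [Pi.add_apply, Pi.smul_apply, smul_eq_mul, Pi.single_eq_same] at hconv hfDe ⊢
    constructor <;> nlinarith
  · simpa [Pi.single_eq_of_ne hne] using hconv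

/-- `f + D` is a flow from `A` to `B` of larger value than `f`, except that conservation fails
at `x`, where it leaves a surplus. -/
def IsAugmentingTo (N : FlowNetwork V E) (A B : Finset E) (f D : E → ℝ) (x : V) : Prop :=
  N.WithinCap (f + D) ∧ (∀ e ∈ (N.Ein \ A) ∪ (N.Eout \ B), D e = 0) ∧ 0 < ∑ e ∈ A, D e ∧
    ∃ d > 0, N.netInflow D = Pi.single x d

section Augmentation

variable {N : FlowNetwork V E} {A B : Finset E} {f D : E → ℝ} {x : V} {e : E}

lemma isAugmentingTo_head (hA : A ⊆ N.Ein) (hf : N.WithinCap f) (he : e ∈ A)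
    (hlt : f e < N.cap e) :
    N.IsAugmentingTo A B f ((N.cap e - f e) • Pi.single e 1) (N.head e) := by
  refine ⟨fun e' => ?_, fun e' he' => ?_, ?_, N.cap e - f e, by linarith, ?_⟩
  · rcases eq_or_ne e' e with rfl | hne
    · simp [N.cap_nonneg]
    · simpa [Pi.single_eq_of_ne hne] using hf e'
  · have hne : e' ≠ e := by
      rintro rfl
      rcases mem_union.mp he' with h | h
      · exact (mem_sdiff.mp h).2 he
      · exact disjoint_left.mp N.disj_in_out (hA he) (mem_sdiff.mp h).1
    simp [Pi.single_eq_of_ne hne]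
  · simp [← mul_sum, sum_pi_single', he, hlt]
  · ext v
    have hout : e ∉ N.Eout := disjoint_left.mp N.disj_in_out (hA he)
    have hint : e ∉ N.Eint := disjoint_left.mp N.disj_in_int (hA he)
    simp [netInflow_single, hA he, hout, hint, Pi.single_apply, eq_comm]

lemma IsAugmentingTo.smul_add_single (hA : A ⊆ N.Ein) (hD : N.IsAugmentingTo A B f D x)
    (he : e ∈ N.Eint) {s c : ℝ} (hs : 0 < s) (hcap : N.WithinCap (f + (s • D + c • Pi.single e 1)))
    {y : V} (hdiv : ∃ d > 0, N.netInflow (s • D + c • Pi.single e 1) = Pi.single y d) :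
    N.IsAugmentingTo A B f (s • D + c • Pi.single e 1) y := by
  obtain ⟨-, hvan, hval, -⟩ := hD
  refine ⟨hcap, fun e' he' => ?_, ?_, hdiv⟩
  · have hne : e' ≠ e := by
      rintro rfl
      rcases mem_union.mp he' with h | h
      · exact disjoint_left.mp N.disj_in_int (mem_sdiff.mp h).1 he
      · exact disjoint_left.mp N.disj_out_int (mem_sdiff.mp h).1 he
    simp [hvan e' he', Pi.single_eq_of_ne hne]
  · have heA : e ∉ A := fun h => disjoint_left.mp N.disj_in_int (hA h) he
    simpa [sum_add_distrib, ← mul_sum, sum_pi_single', heA] using mul_pos hs hval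

lemma IsAugmentingTo.forward (hA : A ⊆ N.Ein) (hf : N.WithinCap f)
    (hD : N.IsAugmentingTo A B f D x) (he : e ∈ N.Eint) (ht : N.tail e = x)
    (hlt : f e < N.cap e) : ∃ D', N.IsAugmentingTo A B f D' (N.head e) := by
  obtain ⟨d, hd, hdiv⟩ := hD.2.2.2
  obtain ⟨s, hs, hcap⟩ := hf.exists_push_forward hD.1 hd hlt
  refine ⟨_, hD.smul_add_single hA he hs hcap ⟨s * d, mul_pos hs hd, ?_⟩⟩
  rw [map_add, map_smul, map_smul, hdiv, netInflow_single_of_mem_Eint N he, ht]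
  ext v
  simp only [Pi.add_apply, Pi.smul_apply, Pi.sub_apply, Pi.single_apply, smul_eq_mul]
  split_ifs <;> ring

lemma IsAugmentingTo.backward (hA : A ⊆ N.Ein) (hf : N.WithinCap f)
    (hD : N.IsAugmentingTo A B f D x) (he : e ∈ N.Eint) (hh : N.head e = x)
    (hpos : 0 < f e) : ∃ D', N.IsAugmentingTo A B f D' (N.tail e) := by
  obtain ⟨d, hd, hdiv⟩ := hD.2.2.2
  obtain ⟨s, hs, hcap⟩ := hf.exists_push_backward hD.1 hd hpos
  refine ⟨_, hD.smul_add_single hA he hs hcap ⟨s * d, mul_pos hs hd, ?_⟩⟩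
  rw [map_add, map_smul, map_smul, hdiv, netInflow_single_of_mem_Eint N he, hh]
  ext v
  simp only [Pi.add_apply, Pi.smul_apply, Pi.sub_apply, Pi.single_apply, smul_eq_mul]
  split_ifs <;> ring

lemma IsAugmentingTo.exists_gt (hA : A ⊆ N.Ein) (hB : B ⊆ N.Eout) (hf : N.IsFlowFromTo A B f)
    (hD : N.IsAugmentingTo A B f D x) (he : e ∈ B) (ht : N.tail e = x) (hlt : f e < N.cap e) :
    ∃ g, N.IsFlowFromTo A B g ∧ ∑ e ∈ A, f e < ∑ e ∈ A, g e := by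
  obtain ⟨hfD, hvan, hval, d, hd, hdiv⟩ := hD
  obtain ⟨s, hs, hcap⟩ := hf.1.withinCap.exists_push_forward hfD hd hlt
  have hout : e ∈ N.Eout := hB he
  have hin : e ∉ N.Ein := disjoint_right.mp N.disj_in_out hout
  have hint : e ∉ N.Eint := disjoint_left.mp N.disj_out_int hout
  refine ⟨_, ⟨feasible_iff.mpr ⟨fun e' => (hcap e').1, fun e' => (hcap e').2, ?_⟩,
    fun e' he' => ?_⟩, ?_⟩
  · ext v
    rw [map_add, map_add, map_smul, map_smul, hdiv, (feasible_iff.mp hf.1).2.2]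
    simp only [Pi.add_apply, Pi.smul_apply, netInflow_single, Pi.single_apply, smul_eq_mul,
      mem_union, hin, hint, hout, false_or, true_or, true_and, false_and, Pi.zero_apply]
    split_ifs <;> simp_all
  · have hne : e' ≠ e := by
      rintro rfl
      rcases mem_union.mp he' with h | h
      · exact hin (mem_sdiff.mp h).1
      · exact (mem_sdiff.mp h).2 he
    simp [hf.2 e' he', hvan e' he', Pi.single_eq_of_ne hne]
  · have heA : e ∉ A := fun h => hin (hA h)
    simpa [sum_add_distrib, ← mul_sum, sum_pi_single', heA] using mul_pos hs hval

end Augmentation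

lemma IsFlowFromTo.sum_filter_Ein {N : FlowNetwork V E} {A B : Finset E} {f : E → ℝ}
    (hf : N.IsFlowFromTo A B f) (hA : A ⊆ N.Ein) (p : E → Prop) [DecidablePred p] :
    ∑ e ∈ N.Ein.filter p, f e = ∑ e ∈ A.filter p, f e := by
  refine (sum_subset (filter_subset_filter p hA) fun e he heA => hf.2 e ?_).symm
  simp_all

lemma IsFlowFromTo.sum_filter_Eout {N : FlowNetwork V E} {A B : Finset E} {f : E → ℝ}
    (hf : N.IsFlowFromTo A B f) (hB : B ⊆ N.Eout) (p : E → Prop) [DecidablePred p] :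
    ∑ e ∈ N.Eout.filter p, f e = ∑ e ∈ B.filter p, f e := by
  refine (sum_subset (filter_subset_filter p hB) fun e he heB => hf.2 e ?_).symm
  simp_all

lemma IsFlowFromTo.sum_eq_cutCap {N : FlowNetwork V E} {A B : Finset E} {f : E → ℝ}
    (hf : N.IsFlowFromTo A B f) (hA : A ⊆ N.Ein) (hB : B ⊆ N.Eout) {S : Finset V}
    (hA_sat : ∀ e ∈ A, N.head e ∉ S → f e = N.cap e)
    (hB_sat : ∀ e ∈ B, N.tail e ∈ S → f e = N.cap e)
    (hout_sat : ∀ e ∈ N.Eint, N.tail e ∈ S → N.head e ∉ S → f e = N.cap e)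
    (hin_zero : ∀ e ∈ N.Eint, N.tail e ∉ S → N.head e ∈ S → f e = 0) :
    ∑ e ∈ A, f e = N.cutCap A B S := by
  have hbal := N.sum_netInflow f S
  simp only [(feasible_iff.mp hf.1).2.2, Pi.zero_apply, sum_const_zero,
    hf.sum_filter_Ein hA, hf.sum_filter_Eout hB] at hbal
  have hA_split : ∑ e ∈ A.filter (fun e => N.head e ∈ S), f e +
      ∑ e ∈ A.filter (fun e => N.head e ∉ S), f e = ∑ e ∈ A, f e :=
    sum_filter_add_sum_filter_not _ _ _
  have h₁ : ∑ e ∈ A.filter (fun e => N.head e ∉ S), f e =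
      ∑ e ∈ A.filter (fun e => N.head e ∉ S), N.cap e :=
    sum_congr rfl fun e he => hA_sat e (mem_filter.mp he).1 (mem_filter.mp he).2
  have h₂ : ∑ e ∈ B.filter (fun e => N.tail e ∈ S), f e =
      ∑ e ∈ B.filter (fun e => N.tail e ∈ S), N.cap e :=
    sum_congr rfl fun e he => hB_sat e (mem_filter.mp he).1 (mem_filter.mp he).2
  have h₃ : ∑ e ∈ N.Eint.filter (fun e => N.tail e ∈ S ∧ N.head e ∉ S), f e =
      ∑ e ∈ N.Eint.filter (fun e => N.tail e ∈ S ∧ N.head e ∉ S), N.cap e :=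
    sum_congr rfl fun e he => by
      obtain ⟨he, ht, hh⟩ := mem_filter.mp he
      exact hout_sat e he ht hh
  have h₄ : ∑ e ∈ N.Eint.filter (fun e => N.tail e ∉ S ∧ N.head e ∈ S), f e = 0 :=
    sum_eq_zero fun e he => by
      obtain ⟨he, ht, hh⟩ := mem_filter.mp he
      exact hin_zero e he ht hh
  rw [cutCap]
  linarith

theorem exists_maxFromTo_eq_cutCap (N : FlowNetwork V E) {A B : Finset E} (hA : A ⊆ N.Ein)
    (hB : B ⊆ N.Eout) : ∃ S, N.maxFromTo A B = N.cutCap A B S := by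
  classical
  obtain ⟨f, hf, hfmax⟩ := N.exists_isFlowFromTo_sum_eq_maxFromTo A B
  have hwc := hf.1.withinCap
  set S := univ.filter fun x => ∃ D, N.IsAugmentingTo A B f D x with hS_def
  have hS : ∀ x, x ∈ S ↔ ∃ D, N.IsAugmentingTo A B f D x := by simp [hS_def]
  refine ⟨S, hfmax ▸ hf.sum_eq_cutCap hA hB ?_ ?_ ?_ ?_⟩
  · refine fun e he hh => by_contra fun hne => hh ?_
    exact (hS _).mpr ⟨_, isAugmentingTo_head hA hwc he ((hwc e).2.lt_of_ne hne)⟩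
  · refine fun e he ht => by_contra fun hne => ?_
    obtain ⟨D, hD⟩ := (hS _).mp ht
    obtain ⟨g, hg, hlt⟩ := hD.exists_gt hA hB hf he rfl ((hwc e).2.lt_of_ne hne)
    exact (hfmax ▸ le_maxFromTo hg).not_gt hlt
  · refine fun e he ht hh => by_contra fun hne => hh ?_
    obtain ⟨D, hD⟩ := (hS _).mp ht
    exact (hS _).mpr (hD.forward hA hwc he rfl ((hwc e).2.lt_of_ne hne))
  · refine fun e he ht hh => by_contra fun hne => ht ?_
    obtain ⟨D, hD⟩ := (hS _).mp hh
    exact (hS _).mpr (hD.backward hA hwc he rfl ((hwc e).1.lt_of_ne' hne))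

def withCap (N : FlowNetwork V E) (c : E → ℝ) (hc : ∀ e, 0 ≤ c e) : FlowNetwork V E :=
  { N with cap := c, cap_nonneg := hc }

lemma Feasible.of_withCap {N : FlowNetwork V E} {c : E → ℝ} {hc : ∀ e, 0 ≤ c e} {f : E → ℝ}
    (hf : (N.withCap c hc).Feasible f) (hcN : ∀ e, c e ≤ N.cap e) : N.Feasible f :=
  ⟨hf.1, fun e => (hf.2.1 e).trans (hcN e), hf.2.2⟩

/-- Gale's feasibility theorem. -/
theorem exists_feasible_extension (N : FlowNetwork V E) (g : E → ℝ)
    (hg0 : ∀ e ∈ N.Ein ∪ N.Eout, 0 ≤ g e) (hg_cap : ∀ e ∈ N.Ein ∪ N.Eout, g e ≤ N.cap e)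
    (hg_bal : ∑ e ∈ N.Ein, g e = ∑ e ∈ N.Eout, g e)
    (hg_cut : ∀ S : Finset V, ∑ e ∈ N.Ein.filter (fun e => N.head e ∈ S), g e -
      ∑ e ∈ N.Eout.filter (fun e => N.tail e ∈ S), g e ≤
      ∑ e ∈ N.Eint.filter (fun e => N.tail e ∈ S ∧ N.head e ∉ S), N.cap e) :
    ∃ f, N.Feasible f ∧ ∀ e ∈ N.Ein ∪ N.Eout, f e = g e := by
  set c : E → ℝ := fun e => if e ∈ N.Ein ∪ N.Eout then g e else N.cap e
  have hc_io : ∀ e ∈ N.Ein ∪ N.Eout, c e = g e := fun e he => if_pos he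
  have hc_else : ∀ e ∉ N.Ein ∪ N.Eout, c e = N.cap e := fun e he => if_neg he
  have hc0 : ∀ e, 0 ≤ c e := fun e => by
    by_cases he : e ∈ N.Ein ∪ N.Eout
    · exact hc_io e he ▸ hg0 e he
    · exact hc_else e he ▸ N.cap_nonneg e
  have hc_int : ∀ e ∈ N.Eint, c e = N.cap e := fun e he => hc_else e fun h =>
    (mem_union.mp h).elim (disjoint_left.mp N.disj_in_int · he)
      (disjoint_left.mp N.disj_out_int · he)
  set N' := N.withCap c hc0
  obtain ⟨f, hf, hfmax⟩ := N'.exists_isFlowFromTo_sum_eq_maxFromTo N.Ein N.Eout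
  obtain ⟨S, hS⟩ := N'.exists_maxFromTo_eq_cutCap (A := N.Ein) (B := N.Eout) subset_rfl subset_rfl
  have hfg : ∀ e ∈ N.Ein ∪ N.Eout, f e ≤ g e := fun e he => hc_io e he ▸ hf.1.2.1 e
  have hcut : N'.cutCap N.Ein N.Eout S =
      ∑ e ∈ N.Ein.filter (fun e => N.head e ∉ S), g e +
        ∑ e ∈ N.Eout.filter (fun e => N.tail e ∈ S), g e +
        ∑ e ∈ N.Eint.filter (fun e => N.tail e ∈ S ∧ N.head e ∉ S), N.cap e := by
    simp only [cutCap, N', withCap]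
    congr 1
    · congr 1 <;> refine sum_congr rfl fun e he => hc_io e ?_ <;> simp_all
    · exact sum_congr rfl fun e he => hc_int e (mem_filter.mp he).1
  have hin : ∀ e ∈ N.Ein, f e = g e := by
    refine (sum_eq_sum_iff_of_le fun e he => hfg e (mem_union_left _ he)).mp
      (le_antisymm (sum_le_sum fun e he => hfg e (mem_union_left _ he)) ?_)
    have hS_cut := hg_cut S
    have hsplit := sum_filter_add_sum_filter_not N.Ein (fun e => N.head e ∈ S) g
    rw [hfmax, hS, hcut]
    linarith
  have hout : ∀ e ∈ N.Eout, f e = g e := by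
    refine (sum_eq_sum_iff_of_le fun e he => hfg e (mem_union_right _ he)).mp ?_
    rw [← hg_bal, ← sum_congr rfl hin]
    exact hf.1.sum_Ein_eq_sum_Eout.symm
  refine ⟨f, hf.1.of_withCap fun e => ?_, fun e he => (mem_union.mp he).elim (hin e) (hout e)⟩
  by_cases he : e ∈ N.Ein ∪ N.Eout
  · exact (hc_io e he).trans_le (hg_cap e he)
  · exact (hc_else e he).le

lemma isTyping_maxFromTo (N : FlowNetwork V E) :
    N.IsTyping (fun A B => -(N.maxFromTo (N.Ein \ A) B))
      (fun A B => N.maxFromTo A (N.Eout \ B)) :=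
  fun _ _ _ _ => (neg_nonpos.mpr (N.maxFromTo_nonneg _ _)).trans (N.maxFromTo_nonneg _ _)

lemma Feasible.satisfiesTyping_maxFromTo {N : FlowNetwork V E} {f : E → ℝ} (hf : N.Feasible f) :
    N.SatisfiesTyping (fun A B => -(N.maxFromTo (N.Ein \ A) B))
      (fun A B => N.maxFromTo A (N.Eout \ B)) f := by
  intro A hA B hB
  obtain ⟨S, hS⟩ := N.exists_maxFromTo_eq_cutCap (sdiff_subset (t := A)) hB
  obtain ⟨T, hT⟩ := N.exists_maxFromTo_eq_cutCap hA (sdiff_subset (t := B))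
  have hlo := hf.sum_sub_sum_le_cutCap (sdiff_subset (t := A)) (sdiff_subset (t := B)) S
  have hhi := hf.sum_sub_sum_le_cutCap hA hB T
  rw [Finset.sdiff_sdiff_eq_self hB] at hlo
  have hA_split := sum_sdiff hA (f := f)
  have hB_split := sum_sdiff hB (f := f)
  have hbal := hf.sum_Ein_eq_sum_Eout
  constructor <;> linarith

lemma exists_feasible_of_satisfiesTyping_maxFromTo (N : FlowNetwork V E) {g : E → ℝ}
    (hg0 : ∀ e ∈ N.Ein ∪ N.Eout, 0 ≤ g e)
    (hg : N.SatisfiesTyping (fun A B => -(N.maxFromTo (N.Ein \ A) B))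
      (fun A B => N.maxFromTo A (N.Eout \ B)) g) :
    ∃ f, N.Feasible f ∧ ∀ e ∈ N.Ein ∪ N.Eout, f e = g e := by
  refine N.exists_feasible_extension g hg0 (fun e he => ?_) ?_ fun S => ?_
  · rcases mem_union.mp he with he | he
    · have hhi := (hg {e} (singleton_subset_iff.mpr he) ∅ (empty_subset _)).2
      have hcap := N.maxFromTo_le_cutCap (singleton_subset_iff.mpr he) subset_rfl ∅
      simp only [sum_singleton, sum_empty, sub_zero, sdiff_empty, cutCap_empty] at hhi hcap
      linarith
    · have hlo := (hg ∅ (empty_subset _) {e} (singleton_subset_iff.mpr he)).1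
      have hcap := N.maxFromTo_le_cutCap subset_rfl (singleton_subset_iff.mpr he) univ
      simp only [sdiff_empty, sum_empty, sum_singleton, zero_sub, neg_le_neg_iff,
        cutCap_univ] at hlo hcap
      linarith
  · obtain ⟨hlo, hhi⟩ := hg N.Ein subset_rfl N.Eout subset_rfl
    have h₀ := N.maxFromTo_le_cutCap (empty_subset _) subset_rfl ∅
    have h₁ := N.maxFromTo_le_cutCap subset_rfl (empty_subset _) univ
    simp only [Finset.sdiff_self, cutCap_empty, cutCap_univ, sum_empty] at hlo hhi h₀ h₁
    linarith
  · have hhi := (hg _ (filter_subset (fun e => N.head e ∈ S) _) _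
      (filter_subset (fun e => N.tail e ∈ S) _)).2
    have hcap := N.maxFromTo_le_cutCap (filter_subset (fun e => N.head e ∈ S) _)
      (filter_subset (fun e => N.tail e ∉ S) _) S
    simp only [← filter_not] at hhi
    simp only [cutCap, filter_filter, and_not_self, not_and_self, filter_false, sum_empty,
      add_zero, zero_add] at hcap
    linarith

/-- `τ*(A,B) := [-maxFromTo N (Ein \ A) B, maxFromTo N A (Eout \ B)]`
is a well-defined typing, and it is a principal typing for `N`. -/
theorem stmt10 (N : FlowNetwork V E) :
    N.IsTyping (fun A B => -(N.maxFromTo (N.Ein \ A) B))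
               (fun A B => N.maxFromTo A (N.Eout \ B)) ∧
    N.PrincipalTyping (fun A B => -(N.maxFromTo (N.Ein \ A) B))
                      (fun A B => N.maxFromTo A (N.Eout \ B)) :=
  ⟨N.isTyping_maxFromTo, N.isTyping_maxFromTo, fun _ hf => hf.satisfiesTyping_maxFromTo,
    fun _ hg0 hg => N.exists_feasible_of_satisfiesTyping_maxFromTo hg0 hg⟩

end FlowNetwork
end
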